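/- arXiv:2512.04925 — 13 statements merged into one kernel-verified Lean document; each statement's English description precedes it below -/
import Mathlib

section
/- Let S be a numerical semigroup and x, y, n ∈ ℕ. If y ∈ S or n ∈ S, then |S ∩ [x, x+n-1]| ≤ |S ∩ [x+y, x+y+n-1]|. -/
/-- σ(x) = x/2 - |S ∩ [0,x]| + 1 -/
noncomputable def sig (S : Set ℕ) (x : ℕ) : ℚ :=
  (x : ℚ) / 2 - ((S ∩ Set.Icc 0 x).ncard : ℚ) + 1

/-- ngCond: least c with [c,∞) ⊆ S -/
noncomputable def ngCond (S : Set ℕ) : ℕ := sInf {k : ℕ | ∀ n, k ≤ n → n ∈ S}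

theorem stmt3 (S : Set ℕ) (h0 : (0:ℕ) ∈ S)
    (hadd : ∀ a ∈ S, ∀ b ∈ S, a + b ∈ S) (hfin : Sᶜ.Finite)
    (x y n : ℕ) (h : y ∈ S ∨ n ∈ S) :
    (S ∩ Set.Ico x (x + n)).ncard ≤ (S ∩ Set.Ico (x + y) (x + y + n)).ncard := by
  have hfinT : (S ∩ Set.Ico (x + y) (x + y + n)).Finite :=
    (Set.finite_Ico _ _).inter_of_right _
  rcases h with hy | hn
  · apply Set.ncard_le_ncard_of_injOn (fun s => s + y) ?_ ?_ hfinT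
    · rintro a ⟨ha, hx⟩
      simp only [Set.mem_Ico] at hx
      simp only [Set.mem_inter_iff, Set.mem_Ico]
      exact ⟨hadd a ha y hy, by omega, by omega⟩
    · intro a _ b _ hab
      simpa using hab
  · rcases Nat.eq_zero_or_pos n with rfl | hn0
    · simp
    have hmul : ∀ k, n * k ∈ S := by
      intro k; induction k with
      | zero => simpa using h0
      | succ k ih => simpa [Nat.mul_succ] using hadd _ ih n hn
    apply Set.ncard_le_ncard_of_injOn (fun s => s + n * ((x + y - s + n - 1) / n)) ?_ ?_ hfinT
    · rintro a ⟨ha, hx1⟩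
      simp only [Set.mem_Ico] at hx1
      have h1 : n * ((x + y - a + n - 1) / n) + (x + y - a + n - 1) % n
          = x + y - a + n - 1 := Nat.div_add_mod _ n
      have h2 : (x + y - a + n - 1) % n < n := Nat.mod_lt _ hn0
      simp only [Set.mem_inter_iff, Set.mem_Ico]
      rcases le_or_gt (x + y) a with hge | hlt
      · have hz : x + y - a = 0 := by omega
        have hq0 : (x + y - a + n - 1) / n = 0 := by
          rw [hz]; exact Nat.div_eq_of_lt (by omega)
        refine ⟨hadd a ha _ (hmul _), ?_, ?_⟩ <;> simp only [hq0, Nat.mul_zero] <;> omega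
      · refine ⟨hadd a ha _ (hmul _), ?_, ?_⟩ <;> omega
    · rintro a ⟨ha, hax⟩ b ⟨hb, hbx⟩ hab
      simp only [Set.mem_Ico] at hax hbx
      simp only at hab
      have hmod : a % n = b % n := by
        have : (a + n * ((x + y - a + n - 1) / n)) % n
            = (b + n * ((x + y - b + n - 1) / n)) % n := by rw [hab]
        simpa [Nat.add_mul_mod_self_left] using this
      rcases le_total a b with hle | hle
      · have hd : n ∣ b - a := (Nat.modEq_iff_dvd' hle).mp hmod
        rcases Nat.eq_zero_or_pos (b - a) with h0' | hpos
        · omega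
        · have := Nat.le_of_dvd hpos hd; omega
      · have hd : n ∣ a - b := (Nat.modEq_iff_dvd' hle).mp hmod.symm
        rcases Nat.eq_zero_or_pos (a - b) with h0' | hpos
        · omega
        · have := Nat.le_of_dvd hpos hd; omega
end

section
/- (Clifford's Theorem for numerical semigroups) Let S be a numerical semigroup with genus g(S). Then for every x ∈ ℕ with x ≤ 2g(S) - 2, we have |S ∩ [0,x]| ≤ x/2 + 1. -/
section

variable {S : Set ℕ}

theorem two_mul_ncard_inter_Icc_le_of_lt_notMem (h0 : 0 ∈ S)
    (hadd : ∀ a ∈ S, ∀ b ∈ S, a + b ∈ S) {f x : ℕ} (hf : f ∉ S) (hxf : x < f) :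
    2 * (S ∩ Set.Icc 0 x).ncard ≤ x + 2 := by
  classical
  set A := S ∩ Set.Icc 0 x
  set m := Nat.findGreatest (· ∈ S) (f - x - 1)
  have hm : m ∈ S := Nat.findGreatest_spec (Nat.zero_le _) h0
  have hm_le : m ≤ f - x - 1 := Nat.findGreatest_le _
  have reflect : (f - ·) '' A ⊆ Set.Icc (f - x) f \ S := by
    rintro _ ⟨a, ⟨haS, -, hax⟩, rfl⟩
    dsimp only
    refine ⟨⟨by omega, by omega⟩, fun h => hf ?_⟩
    simpa [Nat.add_sub_cancel' (show a ≤ f by omega)] using hadd a haS _ h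
  have shift : (m + ·) '' (A \ {0}) ⊆ Set.Icc (f - x) f ∩ S := by
    rintro _ ⟨a, ⟨⟨haS, -, hax⟩, ha0⟩, rfl⟩
    dsimp only
    have hma : m + a ∈ S := hadd m hm a haS
    refine ⟨⟨?_, by omega⟩, hma⟩
    by_contra! h
    have ha : 0 < a := Nat.pos_of_ne_zero ha0
    exact Nat.findGreatest_is_greatest (n := f - x - 1) (by omega : m < m + a) (by omega) hma
  have hA : A.Finite := (Set.finite_Icc 0 x).subset Set.inter_subset_right
  have h0A : 0 ∈ A := ⟨h0, by simp⟩
  have hinj : Set.InjOn (f - ·) A := fun a ha b hb (hab : f - a = f - b) => by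
    have := ha.2.2; have := hb.2.2; omega
  calc 2 * A.ncard = A.ncard + (A \ {0}).ncard + 1 := by
        rw [add_assoc, Set.ncard_sdiff_singleton_add_one h0A hA, two_mul]
    _ = ((f - ·) '' A).ncard + ((m + ·) '' (A \ {0})).ncard + 1 := by
        rw [hinj.ncard_image, Set.ncard_image_of_injective _ (add_right_injective m)]
    _ ≤ (Set.Icc (f - x) f \ S).ncard + (Set.Icc (f - x) f ∩ S).ncard + 1 :=
        Nat.add_le_add_right (add_le_add (Set.ncard_le_ncard reflect) (Set.ncard_le_ncard shift)) 1
    _ = x + 2 := by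
        rw [add_comm (Set.ncard _),
          Set.ncard_inter_add_ncard_sdiff_eq_ncard _ _ (Set.finite_Icc _ _), Set.ncard_Icc_nat]
        omega

theorem ncard_inter_Icc_add_ncard_compl {x : ℕ} (hS : Sᶜ ⊆ Set.Icc 0 x) :
    (S ∩ Set.Icc 0 x).ncard + Sᶜ.ncard = x + 1 := by
  have h := Set.ncard_inter_add_ncard_sdiff_eq_ncard (Set.Icc 0 x) S (Set.finite_Icc _ _)
  rwa [Set.inter_comm, Set.sdiff_eq, Set.inter_eq_right.mpr hS, Set.ncard_Icc_nat, Nat.sub_zero]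
    at h

end

theorem stmt5_general (S : Set ℕ) (h0 : (0:ℕ) ∈ S)
    (hadd : ∀ a ∈ S, ∀ b ∈ S, a + b ∈ S)
    (x : ℕ) (hx : x + 2 ≤ 2 * Sᶜ.ncard) :
    ((S ∩ Set.Icc 0 x).ncard : ℚ) ≤ (x : ℚ) / 2 + 1 := by
  suffices h : 2 * (S ∩ Set.Icc 0 x).ncard ≤ x + 2 by
    have : (2 * (S ∩ Set.Icc 0 x).ncard : ℚ) ≤ x + 2 := by exact_mod_cast h
    linarith
  by_cases hgap : ∃ f ∉ S, x < f
  · obtain ⟨f, hf, hxf⟩ := hgap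
    exact two_mul_ncard_inter_Icc_le_of_lt_notMem h0 hadd hf hxf
  · push Not at hgap
    have := ncard_inter_Icc_add_ncard_compl (fun n hn => ⟨n.zero_le, hgap n hn⟩)
    omega

theorem stmt5 (S : Set ℕ) (h0 : (0:ℕ) ∈ S)
    (hadd : ∀ a ∈ S, ∀ b ∈ S, a + b ∈ S) (hfin : Sᶜ.Finite)
    (x : ℕ) (hx : x + 2 ≤ 2 * Sᶜ.ncard) :
    ((S ∩ Set.Icc 0 x).ncard : ℚ) ≤ (x : ℚ) / 2 + 1 :=
  stmt5_general S h0 hadd x hx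
end

section
/- Let S be a numerical semigroup with genus g(S). Then 0 ≤ σ(s) ≤ g(S)/2 for every s ∈ S ∩ [0, c(S)], where σ(s) := s/2 - |S ∩ [0,s]| + 1. -/
private lemma mod_inj_aux (s F x y : ℕ) (hx1 : 1 ≤ x) (hxF : x ≤ F) (hyF : y ≤ F)
    (hxy : x ≤ y) (hys : y ≤ s) (h : (F - x) % s = (F - y) % s) : x = y := by
  have hle : F - y ≤ F - x := by omega
  have hdvd : s ∣ (F - x) - (F - y) := (Nat.modEq_iff_dvd' hle).mp h.symm
  have heq : (F - x) - (F - y) = y - x := by omega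
  rw [heq] at hdvd
  have : y - x = 0 := Nat.eq_zero_of_dvd_of_lt hdvd (by omega) |>.symm ▸ rfl
  omega

theorem stmt6 (S : Set ℕ) (h0 : (0:ℕ) ∈ S)
    (hadd : ∀ a ∈ S, ∀ b ∈ S, a + b ∈ S) (hfin : Sᶜ.Finite)
    (s : ℕ) (hs : s ∈ S) (hsc : s ≤ ngCond S) :
    0 ≤ sig S s ∧ sig S s ≤ (Sᶜ.ncard : ℚ) / 2 := by
  classical
  set c := ngCond S with hc
  -- the defining set of the conductor is nonempty
  have hne : {k : ℕ | ∀ n, k ≤ n → n ∈ S}.Nonempty := by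
    obtain ⟨N, hN⟩ := hfin.bddAbove
    refine ⟨N + 1, fun n hn => ?_⟩
    by_contra h
    exact absurd (hN h) (by omega)
  have hcS : ∀ n, c ≤ n → n ∈ S := Nat.sInf_mem hne
  -- case s = 0
  rcases Nat.eq_zero_or_pos s with rfl | hs1
  · have h00 : S ∩ {(0:ℕ)} = {0} := Set.inter_eq_self_of_subset_right
      (Set.singleton_subset_iff.mpr h0)
    have hval : sig S 0 = 0 := by
      simp [sig, Set.Icc_self, h00]
    constructor
    · rw [hval]
    · rw [hval]
      positivity
  -- main case : 1 ≤ s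
  have hc1 : 1 ≤ c := le_trans hs1 hsc
  set F := c - 1 with hF_def
  have hFc : c = F + 1 := by omega
  -- F is not in S
  have hF : F ∉ S := by
    have hlt : F < c := by omega
    have := Nat.notMem_of_lt_sInf (s := {k : ℕ | ∀ n, k ≤ n → n ∈ S}) hlt
    simp only [Set.mem_setOf_eq, not_forall] at this
    obtain ⟨n, hn1, hn2⟩ := this
    have : n = F := by
      by_contra hne'
      exact hn2 (hcS n (by omega))
    exact this ▸ hn2
  have hF1 : 1 ≤ F := by
    rcases Nat.eq_zero_or_pos F with h | h
    · exact absurd (h ▸ h0) hF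
    · exact h
  -- multiples of s are in S
  have hmul : ∀ k : ℕ, k * s ∈ S := by
    intro k
    induction k with
    | zero => simpa using h0
    | succ k ih =>
      have := hadd _ ih _ hs
      simpa [Nat.succ_mul] using this
  have hmod : ∀ z : ℕ, z % s ∈ S → z ∈ S := by
    intro z hz
    have := hadd _ hz _ (hmul (z / s))
    rwa [Nat.mod_add_div'] at this
  have hmodgap : ∀ z : ℕ, z ∉ S → z % s ∉ S := fun z hz h => hz (hmod z h)
  have hmodne0 : ∀ z : ℕ, z ∉ S → z % s ≠ 0 := by
    intro z hz h
    exact hmodgap z hz (h ▸ h0)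
  have hgap : ∀ x ∈ S, x ≤ F → F - x ∉ S := by
    intro x hx hxF hFx
    exact hF (by simpa [Nat.sub_add_cancel hxF] using hadd _ hFx _ hx)
  -- finsets
  set A : Finset ℕ := (Finset.Icc 1 s).filter (· ∈ S) with hA_def
  set B : Finset ℕ := (Finset.Icc 1 s).filter (· ∉ S) with hB_def
  have hABcard : A.card + B.card = s := by
    have h1 : A.card + B.card = (Finset.Icc 1 s).card :=
      Finset.card_filter_add_card_filter_not (p := (· ∈ S))
    rw [Nat.card_Icc] at h1
    omega
  -- the injection
  set ψ : ℕ → ℕ := fun x => if x ≤ F then (F - x) % s else F with hψ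
  have hmaps : ∀ x ∈ A, ψ x ∈ B := by
    intro x hx
    rw [hA_def, Finset.mem_filter, Finset.mem_Icc] at hx
    obtain ⟨⟨hx1, hxs⟩, hxS⟩ := hx
    rw [hB_def, Finset.mem_filter, Finset.mem_Icc]
    by_cases hxF : x ≤ F
    · have hns : F - x ∉ S := hgap x hxS hxF
      have h1 : (F - x) % s ∉ S := hmodgap _ hns
      have h2 : (F - x) % s ≠ 0 := hmodne0 _ hns
      have h3 : (F - x) % s < s := Nat.mod_lt _ hs1
      simp only [hψ, if_pos hxF]
      exact ⟨⟨by omega, by omega⟩, h1⟩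
    · simp only [hψ, if_neg hxF]
      exact ⟨⟨hF1, by omega⟩, hF⟩
  have hinj : Set.InjOn ψ ↑A := by
    intro x hx y hy hxy
    rw [hA_def, Finset.coe_filter, Set.mem_setOf_eq, Finset.mem_Icc] at hx hy
    obtain ⟨⟨hx1, hxs⟩, hxS⟩ := hx
    obtain ⟨⟨hy1, hys⟩, hyS⟩ := hy
    by_cases hxF : x ≤ F <;> by_cases hyF : y ≤ F
    · simp only [hψ, if_pos hxF, if_pos hyF] at hxy
      rcases le_total x y with h | h
      · exact mod_inj_aux s F x y hx1 hxF hyF h (by omega) hxy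
      · exact (mod_inj_aux s F y x hy1 hyF hxF h (by omega) hxy.symm).symm
    · -- y > F, so y = F + 1 = s, and (F - x) % s = F : impossible
      exfalso
      simp only [hψ, if_pos hxF, if_neg hyF] at hxy
      have hsF : s = F + 1 := by omega
      have hlt : F - x < s := by omega
      rw [Nat.mod_eq_of_lt hlt] at hxy
      omega
    · exfalso
      simp only [hψ, if_neg hxF, if_pos hyF] at hxy
      have hsF : s = F + 1 := by omega
      have hlt : F - y < s := by omega
      rw [Nat.mod_eq_of_lt hlt] at hxy
      omega
    · omega
  have hcard : A.card ≤ B.card := Finset.card_le_card_of_injOn ψ hmaps hinj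
  -- B.card ≤ genus
  have hBg : B.card ≤ Sᶜ.ncard := by
    have hsub : (↑B : Set ℕ) ⊆ Sᶜ := by
      intro n hn
      rw [hB_def] at hn
      simp only [Finset.coe_filter, Set.mem_setOf_eq] at hn
      exact hn.2
    have := Set.ncard_le_ncard hsub hfin
    rwa [Set.ncard_coe_finset] at this
  -- count the elements of S in [0, s]
  have hcount : (S ∩ Set.Icc 0 s).ncard = A.card + 1 := by
    have hset : S ∩ Set.Icc 0 s = ↑(insert 0 A) := by
      ext n
      simp only [Set.mem_inter_iff, Set.mem_Icc, Finset.coe_insert, Set.mem_insert_iff,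
        Finset.mem_coe, hA_def, Finset.mem_filter, Finset.mem_Icc]
      constructor
      · rintro ⟨hn, -, hns⟩
        rcases Nat.eq_zero_or_pos n with rfl | h
        · exact Or.inl rfl
        · exact Or.inr ⟨⟨h, hns⟩, hn⟩
      · rintro (rfl | ⟨⟨h1, h2⟩, hn⟩)
        · exact ⟨h0, le_refl 0, Nat.zero_le s⟩
        · exact ⟨hn, Nat.zero_le n, h2⟩
    rw [hset, Set.ncard_coe_finset, Finset.card_insert_of_notMem]
    rw [hA_def]
    simp
  -- finish with arithmetic
  have hA' : (A.card : ℚ) ≤ (B.card : ℚ) := by exact_mod_cast hcard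
  have hAB' : (A.card : ℚ) + (B.card : ℚ) = (s : ℚ) := by exact_mod_cast hABcard
  have hBg' : (B.card : ℚ) ≤ (Sᶜ.ncard : ℚ) := by exact_mod_cast hBg
  constructor
  · rw [sig, hcount]
    push_cast
    linarith
  · rw [sig, hcount]
    push_cast
    linarith
end

section
/- (Riemann-Roch for numerical semigroups) Let S be a numerical semigroup with Frobenius number F and genus g, and write l(x) := |S ∩ [0,x]|. The following are equivalent: (1) S is symmetric, i.e., for every integer x ∈ [0, F], x ∈ S iff F - x ∉ S; (2) l(0) = l(F-1) - g + 1; (3) for every x ∈ ℕ, l(x) = x + l(F-1-x) - g + 1 (where l of a negative argument is interpreted as 0). -/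
theorem stmt7 (S : Set ℕ) (h0 : (0:ℕ) ∈ S)
    (hadd : ∀ a ∈ S, ∀ b ∈ S, a + b ∈ S) (hfin : Sᶜ.Finite) (hne : Sᶜ.Nonempty)
    (F : ℕ) (hF : F = sSup Sᶜ) (g : ℕ) (hg : g = Sᶜ.ncard)
    (l : ℕ → ℕ) (hl : ∀ x, l x = (S ∩ Set.Icc 0 x).ncard) :
    ((∀ x ≤ F, (x ∈ S ↔ F - x ∉ S)) ↔
      ((l 0 : ℤ) = (l (F - 1) : ℤ) - g + 1)) ∧
    (((l 0 : ℤ) = (l (F - 1) : ℤ) - g + 1) ↔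
      (∀ x : ℕ, (l x : ℤ) =
        (x : ℤ) + (if x ≤ F - 1 then (l (F - 1 - x) : ℤ) else 0) - g + 1)) := by
  have hbdd : BddAbove Sᶜ := hfin.bddAbove
  have hFS : F ∉ S := by rw [hF]; exact Nat.sSup_mem hne hbdd
  have hgt : ∀ n, F < n → n ∈ S := by
    intro n hn
    by_contra h
    have : n ≤ F := by rw [hF]; exact le_csSup hbdd h
    omega
  have hF1 : 1 ≤ F := by
    rcases Nat.eq_zero_or_pos F with h | h
    · exact absurd h0 (h ▸ hFS)
    · exact h
  have hcomp_sub : Sᶜ ⊆ Set.Icc 0 F := by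
    intro n hn
    refine ⟨Nat.zero_le n, ?_⟩
    rw [hF]; exact le_csSup hbdd hn
  have hfinS : ∀ x : ℕ, (S ∩ Set.Icc 0 x).Finite :=
    fun x => (Set.finite_Icc 0 x).subset Set.inter_subset_right
  have hfinC : ∀ x : ℕ, (Sᶜ ∩ Set.Icc 0 x).Finite :=
    fun x => (Set.finite_Icc 0 x).subset Set.inter_subset_right
  -- Lemma A : l x + gaps in [0,x] = x+1
  have hA : ∀ x : ℕ, l x + (Sᶜ ∩ Set.Icc 0 x).ncard = x + 1 := by
    intro x
    rw [hl]
    rw [← Set.ncard_union_eq (Set.disjoint_left.mpr fun a ha hb => hb.1 ha.1)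
      (hfinS x) (hfinC x)]
    have hu : (S ∩ Set.Icc 0 x) ∪ (Sᶜ ∩ Set.Icc 0 x) = Set.Icc 0 x := by
      ext n; simp only [Set.mem_union, Set.mem_inter_iff, Set.mem_compl_iff]; tauto
    rw [hu]
    simp [Set.ncard_eq_toFinset_card']
  -- for x ≥ F : l x + g = x + 1
  have hB : ∀ x : ℕ, F ≤ x → l x + g = x + 1 := by
    intro x hx
    have : Sᶜ ∩ Set.Icc 0 x = Sᶜ := by
      apply Set.inter_eq_left.mpr
      intro n hn
      exact ⟨Nat.zero_le n, le_trans (hcomp_sub hn).2 hx⟩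
    have h := hA x
    rw [this, ← hg] at h
    omega
  have hl0 : l 0 = 1 := by
    rw [hl]
    have : S ∩ Set.Icc 0 0 = {0} := by
      ext n
      simp only [Set.Icc_self, Set.mem_inter_iff, Set.mem_singleton_iff]
      constructor
      · exact fun h => h.2
      · rintro rfl; exact ⟨h0, rfl⟩
    rw [this, Set.ncard_singleton]
  -- l (F-1) = l F
  have hlF1 : l (F - 1) = l F := by
    rw [hl, hl]
    congr 1
    ext n
    simp only [Set.mem_inter_iff, Set.mem_Icc]
    constructor
    · rintro ⟨hn, _, hn2⟩; exact ⟨hn, Nat.zero_le _, by omega⟩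
    · rintro ⟨hn, _, hn2⟩
      refine ⟨hn, Nat.zero_le _, ?_⟩
      have : n ≠ F := fun h => hFS (h ▸ hn)
      omega
  have hg1 : 1 ≤ g := by
    rw [hg]; exact (Set.ncard_pos hfin).mpr hne
  have hlFg : l F + g = F + 1 := hB F le_rfl
  -- forward half of symmetry always holds
  have hfwd : ∀ x, x ≤ F → x ∈ S → F - x ∉ S := by
    intro x hx hxS hc
    have : x + (F - x) ∈ S := hadd x hxS (F - x) hc
    rw [Nat.add_sub_cancel' hx] at this
    exact hFS this
  -- injectivity of s ↦ F - s on [0,F]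
  have hinj : ∀ x ≤ F, Set.InjOn (fun s => F - s) (S ∩ Set.Icc 0 x) := by
    intro x hx s1 h1 s2 h2 h
    have := h1.2.2; have := h2.2.2
    simp only at h
    omega
  -- (1) → F + 1 = 2 g
  have h1to : (∀ x ≤ F, (x ∈ S ↔ F - x ∉ S)) → F + 1 = 2 * g := by
    intro hsym
    have himg : (fun s => F - s) '' (S ∩ Set.Icc 0 F) = Sᶜ := by
      ext y
      simp only [Set.mem_image, Set.mem_inter_iff, Set.mem_Icc, Set.mem_compl_iff]
      constructor
      · rintro ⟨s, ⟨hs, _, hsF⟩, rfl⟩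
        exact (hsym s hsF).mp hs
      · intro hy
        have hyF : y ≤ F := (hcomp_sub hy).2
        refine ⟨F - y, ⟨?_, Nat.zero_le _, Nat.sub_le _ _⟩, by omega⟩
        by_contra hc
        exact hy ((hsym y hyF).mpr hc)
    have : l F = g := by
      rw [hl, hg, ← himg, Set.ncard_image_of_injOn (hinj F le_rfl)]
    omega
  -- F + 1 = 2g → (1)
  have hto1 : F + 1 = 2 * g → (∀ x ≤ F, (x ∈ S ↔ F - x ∉ S)) := by
    intro hFg
    have himg : (fun s => F - s) '' (S ∩ Set.Icc 0 F) = Sᶜ := by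
      apply Set.eq_of_subset_of_ncard_le
      · rintro y ⟨s, ⟨hs, _, hsF⟩, rfl⟩
        exact hfwd s hsF hs
      · rw [Set.ncard_image_of_injOn (hinj F le_rfl), ← hl, ← hg]
        omega
      · exact hfin
    intro x hx
    constructor
    · exact hfwd x hx
    · intro hxn
      by_contra hxS
      have hxc : x ∈ Sᶜ := hxS
      rw [← himg] at hxc
      obtain ⟨s, ⟨hs, _, hsF⟩, hse⟩ := hxc
      simp only at hse
      have : F - x = s := by omega
      rw [this] at hxn
      exact hxn hs
  -- symmetry gives the full Riemann-Roch count for x < F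
  have hRR : (∀ x ≤ F, (x ∈ S ↔ F - x ∉ S)) → ∀ x, x < F →
      g = (Sᶜ ∩ Set.Icc 0 (F - 1 - x)).ncard + l x := by
    intro hsym x hx
    have himg : (fun s => F - s) '' (S ∩ Set.Icc 0 x) = Sᶜ ∩ Set.Icc (F - x) F := by
      ext y
      simp only [Set.mem_image, Set.mem_inter_iff, Set.mem_Icc, Set.mem_compl_iff]
      constructor
      · rintro ⟨s, ⟨hs, _, hsx⟩, rfl⟩
        exact ⟨(hsym s (by omega)).mp hs, by omega, Nat.sub_le _ _⟩
      · rintro ⟨hy, hy1, hy2⟩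
        refine ⟨F - y, ⟨?_, Nat.zero_le _, by omega⟩, by omega⟩
        by_contra hc
        exact hy ((hsym y hy2).mpr hc)
    have hcount : (Sᶜ ∩ Set.Icc (F - x) F).ncard = l x := by
      rw [← himg, Set.ncard_image_of_injOn (hinj x (by omega)), hl]
    have hpart : Sᶜ = (Sᶜ ∩ Set.Icc 0 (F - 1 - x)) ∪ (Sᶜ ∩ Set.Icc (F - x) F) := by
      ext n
      simp only [Set.mem_union, Set.mem_inter_iff, Set.mem_Icc, Set.mem_compl_iff]
      constructor
      · intro hn
        have hnF : n ≤ F := (hcomp_sub hn).2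
        rcases Nat.lt_or_ge n (F - x) with h | h
        · exact Or.inl ⟨hn, Nat.zero_le _, by omega⟩
        · exact Or.inr ⟨hn, h, hnF⟩
      · rintro (⟨hn, _⟩ | ⟨hn, _⟩) <;> exact hn
    have hdisj : Disjoint (Sᶜ ∩ Set.Icc 0 (F - 1 - x)) (Sᶜ ∩ Set.Icc (F - x) F) := by
      rw [Set.disjoint_left]
      rintro a ⟨_, _, ha1⟩ ⟨_, ha2, _⟩
      omega
    calc g = Sᶜ.ncard := hg
      _ = ((Sᶜ ∩ Set.Icc 0 (F - 1 - x)) ∪ (Sᶜ ∩ Set.Icc (F - x) F)).ncard := by rw [← hpart]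
      _ = (Sᶜ ∩ Set.Icc 0 (F - 1 - x)).ncard + (Sᶜ ∩ Set.Icc (F - x) F).ncard :=
          Set.ncard_union_eq hdisj (hfinC _) (hfin.subset Set.inter_subset_left)
      _ = (Sᶜ ∩ Set.Icc 0 (F - 1 - x)).ncard + l x := by rw [hcount]
  -- assemble
  have h12 : (∀ x ≤ F, (x ∈ S ↔ F - x ∉ S)) ↔ ((l 0 : ℤ) = (l (F - 1) : ℤ) - g + 1) := by
    constructor
    · intro hsym
      have := h1to hsym
      omega
    · intro h2
      apply hto1
      omega
  refine ⟨h12, ?_, ?_⟩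
  · intro h2 x
    have hsym := h12.mpr h2
    have hFg : F + 1 = 2 * g := h1to hsym
    by_cases hx : x ≤ F - 1
    · rw [if_pos hx]
      have hxF : x < F := by omega
      have hcnt := hRR hsym x hxF
      have hAx := hA (F - 1 - x)
      omega
    · rw [if_neg hx]
      have := hB x (by omega)
      omega
  · intro h3
    have := h3 0
    rw [if_pos (Nat.zero_le _)] at this
    simpa using this
end

section
/- Let S be a symmetric numerical semigroup with genus g, multiplicity m := min(S \ {0}), and Frobenius number F = 2g - 1. Then σ attains its maximum over S ∩ [0, c(S)] at some s with g - ⌈m/2⌉ ≤ s ≤ g. Moreover, if σ attains its maximum at s ∈ S ∩ [0, c(S)-1], then σ(s) = σ(F - s + 1). -/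
open Classical in
/-- number of gaps in [1, x] -/
noncomputable def Gc (S : Set ℕ) (x : ℕ) : ℕ :=
  ((Finset.Icc 1 x).filter (fun a => a ∉ S)).card

open Classical in
/-- number of elements of S in [0, x] -/
noncomputable def Nc (S : Set ℕ) (x : ℕ) : ℕ :=
  ((Finset.Icc 0 x).filter (fun a => a ∈ S)).card

open Classical

lemma ncard_eq_Nc (S : Set ℕ) (x : ℕ) : (S ∩ Set.Icc 0 x).ncard = Nc S x := by
  have : S ∩ Set.Icc 0 x = ↑((Finset.Icc 0 x).filter (fun a => a ∈ S)) := by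
    ext a
    simp [Finset.mem_filter, Finset.mem_Icc, Set.mem_Icc, and_comm]
  rw [this, Set.ncard_coe_finset, Nc]

lemma Nc_add_Gc (S : Set ℕ) (h0 : (0:ℕ) ∈ S) (x : ℕ) : Nc S x + Gc S x = x + 1 := by
  have h1 : Gc S x = ((Finset.Icc 0 x).filter (fun a => a ∉ S)).card := by
    unfold Gc
    congr 1
    ext a
    simp only [Finset.mem_filter, Finset.mem_Icc]
    constructor
    · rintro ⟨⟨h1, h2⟩, h3⟩; exact ⟨⟨Nat.zero_le _, h2⟩, h3⟩
    · rintro ⟨⟨_, h2⟩, h3⟩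
      refine ⟨⟨?_, h2⟩, h3⟩
      rcases Nat.eq_zero_or_pos a with rfl | h
      · exact absurd h0 h3
      · exact h
  rw [Nc, h1, Finset.card_filter_add_card_filter_not]
  simp

lemma sig_eq_Gc {S : Set ℕ} (h0 : (0:ℕ) ∈ S) (x : ℕ) :
    sig S x = (Gc S x : ℚ) - x / 2 := by
  have h := Nc_add_Gc S h0 x
  rw [sig, ncard_eq_Nc]
  have : (Nc S x : ℚ) + (Gc S x : ℚ) = (x : ℚ) + 1 := by exact_mod_cast h
  linarith

lemma sig_le_sig_iff {S : Set ℕ} (h0 : (0:ℕ) ∈ S) (a b : ℕ) :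
    sig S a ≤ sig S b ↔ 2 * Gc S a + b ≤ 2 * Gc S b + a := by
  rw [sig_eq_Gc h0, sig_eq_Gc h0]
  rw [show ((2 * Gc S a + b : ℕ) ≤ (2 * Gc S b + a : ℕ)) ↔
      ((2 * Gc S a + b : ℚ) ≤ (2 * Gc S b + a : ℚ)) by exact_mod_cast Iff.rfl]
  constructor <;> intro h <;> [skip; skip] <;>
    · push_cast at *
      linarith

lemma sig_eq_sig_iff {S : Set ℕ} (h0 : (0:ℕ) ∈ S) (a b : ℕ) :
    sig S a = sig S b ↔ 2 * Gc S a + b = 2 * Gc S b + a := by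
  rw [sig_eq_Gc h0, sig_eq_Gc h0]
  rw [show ((2 * Gc S a + b : ℕ) = (2 * Gc S b + a : ℕ)) ↔
      ((2 * Gc S a + b : ℚ) = (2 * Gc S b + a : ℚ)) by exact_mod_cast Iff.rfl]
  constructor <;> intro h <;> [skip; skip] <;>
    · push_cast at *
      linarith

lemma Gc_succ (S : Set ℕ) (x : ℕ) :
    Gc S (x + 1) = Gc S x + (if x + 1 ∈ S then 0 else 1) := by
  unfold Gc
  have : Finset.Icc 1 (x+1) = insert (x+1) (Finset.Icc 1 x) := by
    ext a; simp [Finset.mem_Icc]; omega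
  rw [this, Finset.filter_insert]
  by_cases h : x + 1 ∈ S
  · rw [if_neg (not_not_intro h), if_pos h]; omega
  · rw [if_pos h, if_neg h, Finset.card_insert_of_notMem (by simp [Finset.mem_Icc])]

lemma Gc_mono (S : Set ℕ) : Monotone (Gc S) := by
  apply monotone_nat_of_le_succ
  intro n
  rw [Gc_succ]
  omega

lemma reflect_count {S : Set ℕ} {F : ℕ} (h0 : (0:ℕ) ∈ S)
    (hsym : ∀ x ≤ F, (x ∈ S ↔ F - x ∉ S)) (x : ℕ) (hx : x + 1 ≤ F) :
    Gc S (F - 1 - x) + Nc S x = Gc S F := by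
  have hsplit : Finset.Icc 1 F = Finset.Icc 1 (F - 1 - x) ∪ Finset.Icc (F - x) F := by
    ext a; simp only [Finset.mem_Icc, Finset.mem_union]; omega
  have hdisj : Disjoint ((Finset.Icc 1 (F - 1 - x)).filter (fun a => a ∉ S))
      ((Finset.Icc (F - x) F).filter (fun a => a ∉ S)) := by
    rw [Finset.disjoint_left]
    intro a ha hb
    simp only [Finset.mem_filter, Finset.mem_Icc] at ha hb
    omega
  have hGF : Gc S F = Gc S (F - 1 - x) +
      ((Finset.Icc (F - x) F).filter (fun a => a ∉ S)).card := by
    unfold Gc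
    rw [hsplit, Finset.filter_union, Finset.card_union_of_disjoint hdisj]
  have hbij : ((Finset.Icc (F - x) F).filter (fun a => a ∉ S)).card = Nc S x := by
    unfold Nc
    apply Finset.card_bij' (fun u _ => F - u) (fun t _ => F - t)
    · intro u hu
      simp only [Finset.mem_filter, Finset.mem_Icc] at hu ⊢
      refine ⟨⟨Nat.zero_le _, by omega⟩, ?_⟩
      have := hsym (F - u) (by omega)
      have heq : F - (F - u) = u := by omega
      rw [heq] at this
      exact this.mpr hu.2
    · intro t ht
      simp only [Finset.mem_filter, Finset.mem_Icc] at ht ⊢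
      exact ⟨⟨by omega, by omega⟩, (hsym t (by omega)).mp ht.2⟩
    · intro u hu
      simp only [Finset.mem_filter, Finset.mem_Icc] at hu
      omega
    · intro t ht
      simp only [Finset.mem_filter, Finset.mem_Icc] at ht
      omega
  omega

theorem stmt9 (S : Set ℕ) (h0 : (0:ℕ) ∈ S)
    (hadd : ∀ a ∈ S, ∀ b ∈ S, a + b ∈ S) (hfin : Sᶜ.Finite) (hne : Sᶜ.Nonempty)
    (F : ℕ) (hF : F = sSup Sᶜ) (g : ℕ) (hg : g = Sᶜ.ncard)
    (m : ℕ) (hm : m = sInf (S \ {0}))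
    (hsym : ∀ x ≤ F, (x ∈ S ↔ F - x ∉ S)) (hF2g : F + 1 = 2 * g) :
    (∃ s ∈ S, s ≤ ngCond S ∧ g ≤ s + (m + 1) / 2 ∧ s ≤ g ∧
      ∀ t ∈ S, t ≤ ngCond S → sig S t ≤ sig S s) ∧
    (∀ s ∈ S, s ≤ ngCond S - 1 →
      (∀ t ∈ S, t ≤ ngCond S → sig S t ≤ sig S s) →
      sig S s = sig S (F - s + 1)) := by
  -- ===== basic facts =====
  have hFc : F ∈ Sᶜ := hF ▸ Set.Nonempty.csSup_mem hne hfin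
  have hFS : F ∉ S := hFc
  have hgt : ∀ n, F < n → n ∈ S := by
    intro n hn
    by_contra h
    have : n ≤ sSup Sᶜ := le_csSup hfin.bddAbove h
    omega
  have hF1 : 1 ≤ F := by
    rcases Nat.eq_zero_or_pos F with h | h
    · exact absurd (h ▸ h0) hFS
    · exact h
  have hg1 : 1 ≤ g := by omega
  have h1S : (1:ℕ) ∉ S := by
    intro h1
    have hall : ∀ n, n ∈ S := by
      intro n
      induction n with
      | zero => exact h0
      | succ k ih => exact hadd k ih 1 h1
    obtain ⟨w, hw⟩ := hne
    exact hw (hall w)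
  have hmS : m ∈ S ∧ m ≠ 0 := by
    have hne' : (S \ {0}).Nonempty := ⟨F + 1, hgt _ (by omega), by simp⟩
    have := hm ▸ Nat.sInf_mem hne'
    simpa using this
  have hm2 : 2 ≤ m := by
    rcases hmS with ⟨hmem, h0'⟩
    rcases Nat.lt_or_ge m 2 with h | h
    · interval_cases m
      · omega
      · exact absurd hmem h1S
    · exact h
  have hmlow : ∀ y, 0 < y → y < m → y ∉ S := by
    intro y hy hym hyS
    have : m ≤ y := by
      rw [hm]
      exact Nat.sInf_le ⟨hyS, by simpa using Nat.pos_iff_ne_zero.mp hy⟩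
    omega
  -- Gc S F = g
  have hGF : Gc S F = g := by
    have : Sᶜ = ↑((Finset.Icc 1 F).filter (fun a => a ∉ S)) := by
      ext a
      simp only [Set.mem_compl_iff, Finset.coe_filter, Set.mem_setOf_eq, Finset.mem_Icc]
      constructor
      · intro h
        refine ⟨⟨?_, ?_⟩, h⟩
        · rcases Nat.eq_zero_or_pos a with rfl | h'
          · exact absurd h0 h
          · exact h'
        · by_contra h'
          exact h (hgt a (by omega))
      · rintro ⟨_, h⟩; exact h
    rw [hg, this, Set.ncard_coe_finset, Gc]
  have hGtop : ∀ x, F ≤ x → Gc S x = g := by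
    intro x hx
    induction x with
    | zero => omega
    | succ k ih =>
      rcases Nat.lt_or_ge F (k+1) with h | h
      · have hk : F ≤ k := by omega
        rw [Gc_succ, ih hk, if_pos (hgt _ h)]
        omega
      · have : F = k + 1 := by omega
        rw [← this, hGF]
  -- ngCond S = 2 * g
  have hng : ngCond S = 2 * g := by
    have h1 : F + 1 ∈ {k : ℕ | ∀ n, k ≤ n → n ∈ S} := fun n hn => hgt n (by omega)
    have h2 : ngCond S ≤ F + 1 := Nat.sInf_le h1
    have h3 : F + 1 ≤ ngCond S := by
      by_contra h
      have hFmem : F ∈ {k : ℕ | ∀ n, k ≤ n → n ∈ S} → False := fun hk => hFS (hk F le_rfl)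
      have : ngCond S ≤ F := by omega
      have hS : ngCond S ∈ {k : ℕ | ∀ n, k ≤ n → n ∈ S} :=
        Nat.sInf_mem ⟨F + 1, h1⟩
      exact hFS (hS F this)
    omega
  -- reflection identity
  have hrefl : ∀ x, x + 1 ≤ F → Gc S (F - 1 - x) + (x + 1) = Gc S x + g := by
    intro x hx
    have h1 := reflect_count h0 hsym x hx
    have h2 := Nc_add_Gc S h0 x
    omega
  -- membership step
  have hGmem : ∀ x, x + 1 ∈ S → Gc S (x + 1) = Gc S x := by
    intro x hx
    rw [Gc_succ, if_pos hx]
    omega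
  have hGgap : ∀ x, x + 1 ∉ S → Gc S (x + 1) = Gc S x + 1 := by
    intro x hx
    rw [Gc_succ, if_neg hx]
  constructor
  -- ================= PART 1 =================
  · rcases Nat.lt_or_ge g 2 with hgsmall | hg2
    · -- g = 1 : F = 1, take s = 0
      have hgeq : g = 1 := by omega
      have hFeq : F = 1 := by omega
      refine ⟨0, h0, by omega, ?_, by omega, ?_⟩
      · -- g ≤ 0 + (m+1)/2 : need m ≥ 2, (m+1)/2 ≥ 1
        omega
      · intro t ht htle
        rw [hng, hgeq] at htle
        rw [sig_le_sig_iff h0]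
        have hG0 : Gc S 0 = 0 := by simp [Gc]
        rw [hG0]
        interval_cases t
        · omega
        · exact absurd ht (hFeq ▸ hFS)
        · have : Gc S 2 = g := hGtop 2 (by omega)
          omega
    · -- main case g ≥ 2
      have hGm1 : Gc S (m - 1) = m - 1 := by
        have hall : ∀ a ∈ Finset.Icc 1 (m-1), a ∉ S := by
          intro a ha
          simp only [Finset.mem_Icc] at ha
          exact hmlow a (by omega) (by omega)
        rw [Gc, Finset.filter_true_of_mem hall, Nat.card_Icc]
        omega
      have hmF : m ≤ F := by
        by_contra hcc
        have h2 : Gc S (m-1) = g := hGtop (m-1) (by omega)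
        omega
      have hmg : m ≤ g := by
        have h2 : Gc S (m - 1) ≤ Gc S (F - 1) := Gc_mono S (by omega)
        have h3 : Gc S F = Gc S (F - 1) + 1 := by
          have := hGgap (F - 1) (by rwa [Nat.sub_add_cancel hF1])
          rwa [Nat.sub_add_cancel hF1] at this
        omega
      -- sig-reflection
      have hsigrefl : ∀ x, x ≤ 2*g - 2 → sig S (2*g - 2 - x) = sig S x := by
        intro x hx
        rw [sig_eq_sig_iff h0]
        have := hrefl x (by omega)
        have heq : F - 1 - x = 2*g - 2 - x := by omega
        rw [heq] at this
        omega
      -- global maximizer over [0, 2g]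
      obtain ⟨y, hymem, hymax⟩ :=
        Finset.exists_max_image (Finset.Icc 0 (2*g)) (fun z => sig S z) ⟨0, by simp⟩
      simp only [Finset.mem_Icc] at hymem
      have hymax' : ∀ w, w ≤ 2*g → sig S w ≤ sig S y := by
        intro w hw
        exact hymax w (by simp [Finset.mem_Icc, hw])
      -- a maximizer ≤ g - 1
      have hGm1 : Gc S (m - 1) = m - 1 := by
        have : ∀ a ∈ Finset.Icc 1 (m-1), a ∉ S := by
          intro a ha
          simp only [Finset.mem_Icc] at ha
          exact hmlow a (by omega) (by omega)
        rw [Gc, Finset.filter_true_of_mem this, Nat.card_Icc]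
        omega
      obtain ⟨x₁, hx₁le, hx₁eq⟩ : ∃ x₁, x₁ ≤ g - 1 ∧ sig S x₁ = sig S y := by
        rcases Nat.lt_or_ge y g with h | h
        · exact ⟨y, by omega, rfl⟩
        · rcases Nat.lt_or_ge y (2*g - 1) with h' | h'
          · exact ⟨2*g - 2 - y, by omega, hsigrefl y (by omega)⟩
          · -- y = 2g-1 or 2g : sig y ≤ sig (m-1), so m-1 is a maximizer too
            refine ⟨m - 1, by omega, le_antisymm (hymax' (m-1) (by omega)) ?_⟩
            have hy1 : sig S (2*g - 1) = sig S y ∨ sig S (2*g) = sig S y := by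
              rcases Nat.eq_or_lt_of_le h' with h'' | h''
              · left; rw [h'']
              · right
                have : y = 2*g := by omega
                rw [this]
            have hc1 : 2 * Gc S (2*g - 1) = 2 * g := by
              have := hGtop (2*g - 1) (by omega); omega
            have hc2 : 2 * Gc S (2*g) = 2 * g := by
              have := hGtop (2*g) (by omega); omega
            have hcm : 2 * Gc S (m - 1) = 2 * (m - 1) := by omega
            rcases hy1 with he | he
            · rw [← he, sig_le_sig_iff h0]; omega
            · rw [← he, sig_le_sig_iff h0]; omega
      have hx₁max : ∀ w, w ≤ 2*g → sig S w ≤ sig S x₁ := by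
        intro w hw; rw [hx₁eq]; exact hymax' w hw
      -- largest maximizer ≤ g-1
      set A : Finset ℕ := (Finset.Icc 0 (g-1)).filter (fun z => sig S z = sig S x₁) with hA
      have hAne : A.Nonempty := ⟨x₁, by simp [hA, Finset.mem_Icc, hx₁le]⟩
      set x₀ := A.max' hAne with hx₀def
      have hx₀A : x₀ ∈ A := A.max'_mem hAne
      have hx₀le : x₀ ≤ g - 1 := by
        have := hx₀A
        simp only [hA, Finset.mem_filter, Finset.mem_Icc] at this
        exact this.1.2
      have hx₀eq : sig S x₀ = sig S x₁ := by
        have := hx₀A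
        simp only [hA, Finset.mem_filter, Finset.mem_Icc] at this
        exact this.2
      have hx₀max : ∀ w, w ≤ 2*g → sig S w ≤ sig S x₀ := by
        intro w hw; rw [hx₀eq]; exact hx₁max w hw
      have hx₀big : ∀ z, z ≤ g - 1 → sig S z = sig S x₀ → z ≤ x₀ := by
        intro z hz hze
        apply A.le_max' z
        simp only [hA, Finset.mem_filter, Finset.mem_Icc]
        exact ⟨⟨Nat.zero_le _, hz⟩, by rw [hze, hx₀eq]⟩
      -- non-maximizers strictly inside the window
      have hinner : ∀ z, x₀ < z → z < 2*g - 2 - x₀ →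
          2 * Gc S z + x₀ + 1 ≤ 2 * Gc S x₀ + z := by
        intro z hz1 hz2
        have hzle : z ≤ 2*g := by omega
        have hle := (sig_le_sig_iff h0 z x₀).mp (hx₀max z hzle)
        have hneq : ¬ (sig S z = sig S x₀) := by
          intro heq
          rcases Nat.lt_or_ge z g with h | h
          · have := hx₀big z (by omega) heq
            omega
          · have hw := hsigrefl z (by omega)
            have : 2*g - 2 - z ≤ g - 1 := by omega
            have h2 := hx₀big (2*g - 2 - z) this (by rw [hw, heq])
            omega
        have : ¬ (2 * Gc S z + x₀ = 2 * Gc S x₀ + z) := by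
          intro h; exact hneq ((sig_eq_sig_iff h0 z x₀).mpr h)
        omega
      -- the key bound : g - 1 ≤ x₀ + (m+1)/2
      have hbound : g - 1 ≤ x₀ + (m + 1) / 2 := by
        by_contra hcon
        push_neg at hcon
        have hd2 : x₀ + m + 2 ≤ 2*g - 2 - x₀ := by omega
        -- antitone of m-window gap counts
        have hanti : ∀ b, x₀ ≤ b → Gc S (b + m) + Gc S x₀ ≤ Gc S b + Gc S (x₀ + m) := by
          intro b hb
          induction b with
          | zero =>
            have hx00 : x₀ = 0 := by omega
            rw [hx00]
            omega
          | succ k ih =>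
            rcases Nat.lt_or_ge k x₀ with h | h
            · have hxk : x₀ = k + 1 := by omega
              rw [hxk]
              omega
            · have ihk := ih h
              have hstep : Gc S (k + 1 + m) + Gc S k ≤ Gc S (k + 1) + Gc S (k + m) := by
                have heq2 : k + 1 + m = k + m + 1 := by omega
                rcases Classical.em (k + 1 ∈ S) with hk1 | hk1
                · have hk1m : k + m + 1 ∈ S := by
                    have := hadd (k+1) hk1 m hmS.1
                    rwa [heq2] at this
                  have e1 := hGmem (k + m) hk1m
                  have e3 : Gc S k ≤ Gc S (k+1) := Gc_mono S (Nat.le_succ k)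
                  rw [heq2, e1]
                  omega
                · have e1 := hGgap k hk1
                  have e2 : Gc S (k + m + 1) ≤ Gc S (k + m) + 1 := by
                    rw [Gc_succ]
                    split <;> omega
                  rw [heq2]
                  omega
              omega
        set x₀' := 2*g - 2 - x₀ with hx₀'
        have hE0 : 2 * Gc S x₀' + x₀ = 2 * Gc S x₀ + x₀' := by
          have := (sig_eq_sig_iff h0 x₀' x₀).mp (by
            have := hsigrefl x₀ (by omega)
            simpa [hx₀'] using this)
          omega
        have hI1 := hinner (x₀ + m) (by omega) (by omega)
        have hI2 := hinner (x₀' - m) (by omega) (by omega)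
        have hAnt := hanti (x₀' - m) (by omega)
        have hms : x₀' - m + m = x₀' := by omega
        rw [hms] at hAnt
        omega
      -- s := x₀ + 1
      have hsS : x₀ + 1 ∈ S := by
        by_contra hns
        have h1 := hGgap x₀ hns
        have h2 := (sig_le_sig_iff h0 (x₀ + 1) x₀).mp (hx₀max (x₀+1) (by omega))
        omega
      have hGx₀1 : Gc S (x₀ + 1) = Gc S x₀ := hGmem x₀ hsS
      -- lower bound for Gc x₀ : sig (m-1) ≤ sig x₀
      have hGx₀low : x₀ + m ≤ 2 * Gc S x₀ + 1 := by
        have := (sig_le_sig_iff h0 (m-1) x₀).mp (hx₀max (m-1) (by omega))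
        omega
      refine ⟨x₀ + 1, hsS, by rw [hng]; omega, by omega, by omega, ?_⟩
      intro t ht htle
      rw [hng] at htle
      rw [sig_le_sig_iff h0, hGx₀1]
      rcases Nat.eq_zero_or_pos t with rfl | htpos
      · have hG0 : Gc S 0 = 0 := by simp [Gc]
        rw [hG0]
        omega
      · obtain ⟨u, rfl⟩ : ∃ u, t = u + 1 := ⟨t - 1, by omega⟩
        have e1 := hGmem u ht
        have e2 := (sig_le_sig_iff h0 u x₀).mp (hx₀max u (by omega))
        omega
  -- ================= PART 2 =================
  · intro s hsS hsle hsmax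
    rw [hng] at hsle
    have hsmax' : ∀ t ∈ S, t ≤ 2*g → sig S t ≤ sig S s := by
      intro t ht htle
      exact hsmax t ht (by rw [hng]; exact htle)
    rcases Nat.eq_zero_or_pos s with rfl | hspos
    · -- s = 0
      have heq : F - 0 + 1 = 2*g := by omega
      rw [heq, sig_eq_sig_iff h0]
      have hG0 : Gc S 0 = 0 := by simp [Gc]
      have := hGtop (2*g) (by omega)
      omega
    · have hs1 : s ≠ 1 := by
        intro h; rw [h] at hsS; exact h1S hsS
      have hs2 : 2 ≤ s := by omega
      have hsF : s ≤ F := by omega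
      have hkey : F - s + 1 = 2*g - s := by omega
      -- reflection at s - 2
      have hR : Gc S (2*g - s) + (s - 2 + 1) = Gc S (s - 2) + g := by
        have := hrefl (s - 2) (by omega)
        have heq : F - 1 - (s - 2) = 2*g - s := by omega
        rwa [heq] at this
      -- Gc s = Gc (s-1)
      have hGs : Gc S s = Gc S (s - 1) := by
        have := hGmem (s-1) (by rwa [Nat.sub_add_cancel (by omega)])
        rwa [Nat.sub_add_cancel (by omega)] at this
      by_cases hs1S : s - 1 ∈ S
      · exfalso
        have hGs1 : Gc S (s - 1) = Gc S (s - 2) := by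
          have h' : s - 2 + 1 = s - 1 := by omega
          have := hGmem (s-2) (by rwa [h'])
          rwa [h'] at this
        by_cases ht : 2*g - s + 1 ∈ S
        · have h1 := hsmax' (2*g - s + 1) ht (by omega)
          have h2 := (sig_le_sig_iff h0 (2*g - s + 1) s).mp h1
          have h3 := hGmem (2*g - s) ht
          omega
        · have hs2S : s - 2 ∈ S := by
            by_contra h
            have heq : F - (2*g - s + 1) = s - 2 := by omega
            exact ht ((hsym (2*g - s + 1) (by omega)).mpr (heq ▸ h))
          have h1 := hsmax' (s - 2) hs2S (by omega)
          have h2 := (sig_le_sig_iff h0 (s-2) s).mp h1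
          omega
      · -- s - 1 ∉ S : the equality
        have hGs1 : Gc S (s - 1) = Gc S (s - 2) + 1 := by
          have h' : s - 2 + 1 = s - 1 := by omega
          have := hGgap (s-2) (by rwa [h'])
          rwa [h'] at this
        rw [hkey, sig_eq_sig_iff h0]
        omega
end

section
/- Let S be a numerical semigroup of maximal embedding dimension with multiplicity m := m(S), and let T := {s - m : s ∈ S, s ≠ 0} ∪ {0}, which is a numerical semigroup. Then σ_S is maximized at s ∈ S ∩ [0, c(S)] if and only if σ_T is maximized at s - m ∈ T ∩ [0, c(T)]. Moreover, for every nonzero s ∈ S ∩ [0, c(S)], σ_S(s) = σ_T(s - m) + m/2 - 1. -/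
lemma sig_zero (U : Set ℕ) (h0 : 0 ∈ U) : sig U 0 = 0 := by
  have h : U ∩ Set.Icc 0 0 = {0} :=
    Set.eq_singleton_iff_unique_mem.mpr
      ⟨⟨h0, by simp⟩, fun x hx => Nat.le_zero.mp hx.2.2⟩
  unfold sig
  rw [h]
  simp

lemma count_aux (S T : Set ℕ) (m : ℕ) (hm0 : m ≠ 0)
    (hTiff : ∀ t, t ∈ T ↔ t + m ∈ S)
    (hmin : ∀ x ∈ S, x ≠ 0 → m ≤ x) (h0 : 0 ∈ S)
    (s : ℕ) (hs : m ≤ s) :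
    (S ∩ Set.Icc 0 s).ncard = (T ∩ Set.Icc 0 (s - m)).ncard + 1 := by
  have hset : S ∩ Set.Icc 0 s = insert 0 ((fun t => t + m) '' (T ∩ Set.Icc 0 (s - m))) := by
    ext x
    simp only [Set.mem_inter_iff, Set.mem_Icc, Set.mem_insert_iff, Set.mem_image]
    constructor
    · rintro ⟨hxS, -, hxs⟩
      by_cases hx0 : x = 0
      · left; exact hx0
      · right
        have hmx := hmin x hxS hx0
        have hx' : x - m + m = x := Nat.sub_add_cancel hmx
        exact ⟨x - m, ⟨(hTiff _).mpr (by rwa [hx']), by omega, by omega⟩, hx'⟩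
    · rintro (rfl | ⟨t, ⟨htT, -, hts⟩, rfl⟩)
      · exact ⟨h0, le_refl 0, Nat.zero_le s⟩
      · exact ⟨(hTiff t).mp htT, Nat.zero_le _, by omega⟩
  have hfinT : (T ∩ Set.Icc 0 (s - m)).Finite :=
    (Set.finite_Icc 0 (s - m)).inter_of_right T
  rw [hset, Set.ncard_insert_of_notMem
      (by simp only [Set.mem_image]; rintro ⟨t, -, ht⟩; omega) (hfinT.image _),
    Set.ncard_image_of_injective _ (add_left_injective m)]

theorem stmt10 (S : Set ℕ) (h0 : (0:ℕ) ∈ S)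
    (hadd : ∀ a ∈ S, ∀ b ∈ S, a + b ∈ S) (hfin : Sᶜ.Finite)
    (m : ℕ) (hm : m = sInf (S \ {0}))
    (T : Set ℕ) (hT : T = {0} ∪ {t : ℕ | t + m ∈ S})
    (hMED : ∀ a ∈ T, ∀ b ∈ T, a + b ∈ T) :
    (∀ s ∈ S, s ≠ 0 → s ≤ ngCond S →
      ((∀ t ∈ S, t ≤ ngCond S → sig S t ≤ sig S s) ↔
        (s - m ∈ T ∧ s - m ≤ ngCond T ∧
          ∀ t ∈ T, t ≤ ngCond T → sig T t ≤ sig T (s - m)))) ∧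
    (∀ s ∈ S, s ≠ 0 → s ≤ ngCond S →
      sig S s = sig T (s - m) + (m : ℚ) / 2 - 1) := by
  -- basic facts
  have hSinf : S.Infinite := by
    have := hfin.infinite_compl
    rwa [compl_compl] at this
  have hSne : (S \ {0}).Nonempty := (hSinf.diff (Set.finite_singleton 0)).nonempty
  have hmmem : m ∈ S \ {0} := hm ▸ Nat.sInf_mem hSne
  have hmS : m ∈ S := hmmem.1
  have hm0 : m ≠ 0 := by simpa using hmmem.2
  have hmin : ∀ x ∈ S, x ≠ 0 → m ≤ x := by
    intro x hx hx0
    rw [hm]; exact Nat.sInf_le ⟨hx, hx0⟩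
  have hTiff : ∀ t, t ∈ T ↔ t + m ∈ S := by
    intro t
    rw [hT]
    simp only [Set.mem_union, Set.mem_singleton_iff, Set.mem_setOf_eq]
    constructor
    · rintro (rfl | h)
      · simpa using hmS
      · exact h
    · intro h; right; exact h
  have h0T : 0 ∈ T := (hTiff 0).mpr (by simpa using hmS)
  -- ngCond facts
  have hAne : {k : ℕ | ∀ n, k ≤ n → n ∈ S}.Nonempty := by
    obtain ⟨N, hN⟩ := hfin.bddAbove
    refine ⟨N + 1, fun n hn => ?_⟩
    by_contra h
    have := hN h
    omega
  have hcS : ∀ n, ngCond S ≤ n → n ∈ S := Nat.sInf_mem hAne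
  have hBcm : ∀ n, ngCond S - m ≤ n → n ∈ T := by
    intro n hn
    exact (hTiff n).mpr (hcS _ (by omega))
  have hcT_le : ngCond T ≤ ngCond S - m := Nat.sInf_le hBcm
  have hcT : ∀ n, ngCond T ≤ n → n ∈ T := Nat.sInf_mem (⟨ngCond S - m, fun n hn => hBcm n hn⟩ : {k | ∀ n, k ≤ n → n ∈ T}.Nonempty)
  have hle2 : ngCond S ≤ ngCond T + m := by
    apply Nat.sInf_le
    intro n hn
    have h1 : n - m ∈ T := hcT _ (by omega)
    have := (hTiff _).mp h1
    rwa [Nat.sub_add_cancel (by omega)] at this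
  -- sig relation for nonzero elements of S
  have hsigrel : ∀ s ∈ S, s ≠ 0 → sig S s = sig T (s - m) + (m : ℚ) / 2 - 1 := by
    intro s hs hs0
    have hms : m ≤ s := hmin s hs hs0
    have hcount := count_aux S T m hm0 hTiff hmin h0 s hms
    unfold sig
    rw [hcount]
    have : ((s - m : ℕ) : ℚ) = (s : ℚ) - (m : ℚ) := by
      push_cast [Nat.cast_sub hms]; ring
    rw [this]
    push_cast
    ring
  refine ⟨?_, fun s hs hs0 _ => hsigrel s hs hs0⟩
  intro s hs hs0 hsc
  -- nonvacuous: ngCond S ≥ 1, so m ≥ 2 and m ≤ ngCond S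
  have hm2 : 2 ≤ m := by
    by_contra h
    have hm1 : m = 1 := by omega
    have hall : ∀ n, n ∈ S := by
      intro n
      induction n with
      | zero => exact h0
      | succ k ih => exact hadd k ih 1 (hm1 ▸ hmS)
    have : ngCond S ≤ 0 := Nat.sInf_le (fun n _ => hall n)
    omega
  have hmc : m ≤ ngCond S := by
    by_contra h
    have : m - 1 ∈ S := hcS _ (by omega)
    have := hmin _ this (by omega)
    omega
  have hms : m ≤ s := hmin s hs hs0
  constructor
  · intro hmax
    refine ⟨(hTiff _).mpr (by rwa [Nat.sub_add_cancel hms]), by omega, ?_⟩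
    intro t ht htc
    have htm : t + m ∈ S := (hTiff t).mp ht
    have h1 : sig T t = sig S (t + m) - (m : ℚ) / 2 + 1 := by
      have := hsigrel (t + m) htm (by omega)
      simp only [Nat.add_sub_cancel] at this
      linarith
    have h2 := hmax (t + m) htm (by omega)
    have h3 := hsigrel s hs hs0
    linarith
  · rintro ⟨-, -, hmax⟩
    intro t ht htc
    by_cases ht0 : t = 0
    · subst ht0
      rw [sig_zero S h0, hsigrel s hs hs0]
      have := hmax 0 h0T (Nat.zero_le _)
      rw [sig_zero T h0T] at this
      have hm2' : (2 : ℚ) ≤ (m : ℚ) := by exact_mod_cast hm2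
      linarith
    · rw [hsigrel t ht ht0, hsigrel s hs hs0]
      have h1 := hmax (t - m) ((hTiff _).mpr (by rwa [Nat.sub_add_cancel (hmin t ht ht0)])) (by omega)
      linarith
end

section
/- Let m, h ∈ ℕ with 1 ≤ h ≤ m - 1 and let S = ⟨m, m+1, ..., m+h⟩ be the numerical semigroup generated by m, m+1, ..., m+h. Then S = {λ₁ m + λ₂ : λ₁, λ₂ ∈ ℕ, 0 ≤ λ₂ ≤ h·λ₁}. -/
/-! A sum of `l₁` generators `m + a₁, …, m + a_{l₁}` with each `aᵢ ≤ h` is `l₁ m + l₂` with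
`l₂ = ∑ aᵢ ≤ h l₁`; conversely every such `l₂` splits into `l₁` parts in `[0, h]`, greedily
taking `h` while more than `h` remains. -/

theorem exists_eq_mul_add_of_mem_closure_Icc {m h n : ℕ}
    (hn : n ∈ AddSubmonoid.closure (Set.Icc m (m + h))) :
    ∃ l1 l2 : ℕ, l2 ≤ h * l1 ∧ n = l1 * m + l2 := by
  induction hn using AddSubmonoid.closure_induction with
  | mem x hx => exact ⟨1, x - m, by grind, by grind⟩
  | zero => exact ⟨0, 0, le_rfl, by simp⟩
  | add _ _ _ _ ha hb =>
    obtain ⟨l1, l2, hl, rfl⟩ := ha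
    obtain ⟨l1', l2', hl', rfl⟩ := hb
    exact ⟨l1 + l1', l2 + l2', by rw [mul_add]; omega, by ring⟩

theorem mul_add_mem_closure_Icc {m h l1 l2 : ℕ} (hl : l2 ≤ h * l1) :
    l1 * m + l2 ∈ AddSubmonoid.closure (Set.Icc m (m + h)) := by
  induction l1 generalizing l2 with
  | zero => simp_all
  | succ k ih =>
    have hgen : m + min l2 h ∈ AddSubmonoid.closure (Set.Icc m (m + h)) :=
      AddSubmonoid.subset_closure ⟨by omega, by omega⟩
    have hrest : l2 - min l2 h ≤ h * k := by rw [mul_add_one] at hl; omega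
    have hsplit : (k + 1) * m + l2 = (m + min l2 h) + (k * m + (l2 - min l2 h)) := by
      rw [add_one_mul]; omega
    exact hsplit ▸ add_mem hgen (ih hrest)

theorem stmt11_general (m h : ℕ) :
    ∀ n : ℕ, n ∈ AddSubmonoid.closure (Set.Icc m (m + h)) ↔
      ∃ l1 l2 : ℕ, l2 ≤ h * l1 ∧ n = l1 * m + l2 := fun _ =>
  ⟨exists_eq_mul_add_of_mem_closure_Icc, fun ⟨_, _, hl, hn⟩ => hn ▸ mul_add_mem_closure_Icc hl⟩

theorem stmt11 (m h : ℕ) (h1 : 1 ≤ h) (h2 : h ≤ m - 1) :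
    ∀ n : ℕ, n ∈ AddSubmonoid.closure (Set.Icc m (m + h)) ↔
      ∃ l1 l2 : ℕ, l2 ≤ h * l1 ∧ n = l1 * m + l2 :=
  stmt11_general m h
end

section
/- Let m, h ∈ ℕ with 1 ≤ h ≤ m - 1 and S = ⟨m, m+1, ..., m+h⟩. Then σ attains its maximum over S ∩ [0, c(S)] at λm where λ := ⌈(m-2)/(2h)⌉, and σ(λm) = λ(m/2 - 1) - h·C(λ,2), where C(λ,2) = λ(λ-1)/2. -/
/-!
The semigroup `⟨m, …, m + h⟩` is the union of the blocks `[k m, k (m + h)]`, `k ≥ 0`, and these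
are pairwise separated by gaps as long as `k h < m`. Counting block by block,
`|S ∩ [0, k m + j]| = k + h·C(k,2) + j + 1` for `j ≤ k h`, so that
`σ(k m + j) = k (m/2 - 1) - h·C(k,2) - j/2`. The conductor is `q m` with `q = ⌈(m - 1)/h⌉`, hence
`σ` is maximal at a block start `k m`, `k ≤ q`, where it is a concave parabola in `k` whose
integer maximum sits at `λ = ⌈(m - 2)/(2h)⌉ ≤ q`.
-/

open Set

def intervalMonoid (m h : ℕ) : AddSubmonoid ℕ := AddSubmonoid.closure (Icc m (m + h))

section IntervalMonoid

variable {m h : ℕ}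

theorem mem_intervalMonoid_iff {n : ℕ} :
    n ∈ intervalMonoid m h ↔ ∃ k, k * m ≤ n ∧ n ≤ k * (m + h) := by
  constructor
  · intro hn
    induction hn using AddSubmonoid.closure_induction with
    | mem x hx => exact ⟨1, by simpa using hx.1, by simpa using hx.2⟩
    | zero => exact ⟨0, by simp, by simp⟩
    | add a b _ _ iha ihb =>
        obtain ⟨k, hk₁, hk₂⟩ := iha
        obtain ⟨l, hl₁, hl₂⟩ := ihb
        exact ⟨k + l, by nlinarith, by nlinarith⟩
  · rintro ⟨k, hk₁, hk₂⟩
    induction k generalizing n with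
    | zero =>
        obtain rfl : n = 0 := by simpa using hk₂
        exact zero_mem _
    | succ k ih =>
        have e₁ : (k + 1) * m = k * m + m := by ring
        have e₂ : (k + 1) * (m + h) = k * (m + h) + (m + h) := by ring
        have hkm : k * m ≤ k * (m + h) := Nat.mul_le_mul_left _ (Nat.le_add_right m h)
        -- peel off the generator `max m (n - k * (m + h))`; the rest lies in the `k`-th block
        have hsplit : n = max m (n - k * (m + h)) + (n - max m (n - k * (m + h))) := by omega
        rw [hsplit]
        refine add_mem (AddSubmonoid.subset_closure ⟨le_max_left _ _, ?_⟩) (ih ?_ ?_) <;> omega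

theorem ncard_inter_Iio_union_Icc (S : Set ℕ) (a b : ℕ) :
    (S ∩ Iio a ∪ Icc a b).ncard = (S ∩ Iio a).ncard + (b + 1 - a) := by
  have hdisj : Disjoint (S ∩ Iio a) (Icc a b) :=
    disjoint_left.2 fun n hn hn' => not_le.2 hn.2 hn'.1
  rw [ncard_union_eq hdisj ((finite_Iio a).subset inter_subset_right), ncard_Icc_nat]

theorem intervalMonoid_inter_Icc_zero {k t : ℕ} (ht₁ : k * m ≤ t) (ht₂ : t ≤ k * (m + h)) :
    (intervalMonoid m h : Set ℕ) ∩ Icc 0 t =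
      (intervalMonoid m h : Set ℕ) ∩ Iio (k * m) ∪ Icc (k * m) t := by
  ext n
  simp only [mem_inter_iff, mem_Icc, mem_Iio, mem_union, SetLike.mem_coe]
  constructor
  · rintro ⟨hn, -, hnt⟩
    by_cases hnk : n < k * m
    · exact Or.inl ⟨hn, hnk⟩
    · exact Or.inr ⟨not_lt.1 hnk, hnt⟩
  · rintro (⟨hn, hnk⟩ | ⟨hkn, hnt⟩)
    · exact ⟨hn, Nat.zero_le n, by omega⟩
    · exact ⟨mem_intervalMonoid_iff.2 ⟨k, hkn, hnt.trans ht₂⟩, Nat.zero_le n, hnt⟩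

theorem intervalMonoid_inter_Iio_succ_mul {k : ℕ} (hk : k * h < m) :
    (intervalMonoid m h : Set ℕ) ∩ Iio ((k + 1) * m) =
      (intervalMonoid m h : Set ℕ) ∩ Icc 0 (k * (m + h)) := by
  have e₁ : (k + 1) * m = k * m + m := by ring
  have e₂ : k * (m + h) = k * m + k * h := by ring
  ext n
  simp only [mem_inter_iff, mem_Icc, mem_Iio, SetLike.mem_coe, and_congr_right_iff]
  intro hn
  obtain ⟨i, hi₁, hi₂⟩ := mem_intervalMonoid_iff.1 hn
  constructor
  · intro hnk
    have hik : i ≤ k := Nat.le_of_lt_succ (Nat.lt_of_mul_lt_mul_right (hi₁.trans_lt hnk))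
    exact ⟨Nat.zero_le n, hi₂.trans (Nat.mul_le_mul_right _ hik)⟩
  · rintro ⟨-, hnk⟩
    omega

theorem ncard_intervalMonoid_inter_Iio_mul {k : ℕ} (hk : k * h < m + h) :
    ((intervalMonoid m h : Set ℕ) ∩ Iio (k * m)).ncard = k + h * k.choose 2 := by
  induction k with
  | zero => simp
  | succ k ih =>
      have hkh : k * h < m := by nlinarith
      have e : k * (m + h) + 1 - k * m = k * h + 1 := by
        rw [Nat.mul_add]; omega
      rw [intervalMonoid_inter_Iio_succ_mul hkh,
        intervalMonoid_inter_Icc_zero (Nat.mul_le_mul_left k (Nat.le_add_right m h)) le_rfl,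
        ncard_inter_Iio_union_Icc, ih (by omega), e, Nat.choose_succ_succ, Nat.choose_one_right]
      ring

theorem sig_intervalMonoid {k t : ℕ} (hk : k * h < m + h) (ht₁ : k * m ≤ t)
    (ht₂ : t ≤ k * (m + h)) :
    sig (intervalMonoid m h) t =
      (k : ℚ) * m - k - h * ((k : ℚ) * ((k : ℚ) - 1) / 2) - (t : ℚ) / 2 := by
  rw [sig, intervalMonoid_inter_Icc_zero ht₁ ht₂, ncard_inter_Iio_union_Icc,
    ncard_intervalMonoid_inter_Iio_mul hk, Nat.sub_add_comm ht₁]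
  push_cast [Nat.cast_sub ht₁, Nat.cast_choose_two]
  ring

end IntervalMonoid

theorem ngCond_eq {S : Set ℕ} {c : ℕ} (htail : ∀ n, c ≤ n → n ∈ S)
    (hgap : ∀ n, n + 1 = c → n ∉ S) : ngCond S = c := by
  refine le_antisymm (Nat.sInf_le htail) (le_csInf ⟨c, htail⟩ fun b hb => ?_)
  by_contra! hbc
  exact hgap (c - 1) (by omega) (hb _ (by omega))

theorem ngCond_intervalMonoid {m h q : ℕ} (hm : 0 < m) (hq₁ : m ≤ q * h + 1)
    (hq₂ : q * h + 1 < m + h) : ngCond (intervalMonoid m h) = q * m := by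
  refine ngCond_eq (fun n hn => ?_) (fun n hn hmem => ?_)
  · have hq : q ≤ n / m := (Nat.le_div_iff_mul_le hm).2 hn
    have hr : n < n / m * m + m := Nat.lt_div_mul_add hm
    have : q * h ≤ n / m * h := Nat.mul_le_mul_right _ hq
    refine mem_intervalMonoid_iff.2 ⟨n / m, Nat.div_mul_le_self n m, ?_⟩
    rw [Nat.mul_add]
    omega
  · obtain ⟨k, hk₁, hk₂⟩ := mem_intervalMonoid_iff.1 hmem
    -- the `k`-th block ends before `q * m - 1` as soon as `k < q`
    have hkq : k + 1 ≤ q := Nat.lt_of_mul_lt_mul_right (show k * m < q * m by omega)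
    have : (k + 1) * (m + h) ≤ q * (m + h) := Nat.mul_le_mul_right _ hkq
    have e₁ : (k + 1) * (m + h) = k * m + k * h + m + h := by ring
    have e₂ : q * (m + h) = q * m + q * h := by ring
    rw [Nat.mul_add] at hk₂
    omega

theorem parabola_le_vertex {K : Type*} [Field K] [LinearOrder K] [IsStrictOrderedRing K]
    {a c : K} (hc : 0 ≤ c) {k l : ℕ} (hl₁ : a ≤ l * (2 * c)) (hl₂ : l * (2 * c) ≤ a + 2 * c) :
    k * a / 2 - c * (k * (k - 1) / 2) ≤ l * a / 2 - c * (l * (l - 1) / 2) := by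
  rw [← sub_nonneg, show l * a / 2 - c * (l * (l - 1) / 2) - (k * a / 2 - c * (k * (k - 1) / 2)) =
      ((l : K) - k) * (a - c * (l + k - 1)) / 2 by ring]
  rcases lt_trichotomy k l with hkl | rfl | hkl
  · have hkl' : (k : K) + 1 ≤ l := by exact_mod_cast hkl
    have : 0 ≤ a - c * (l + k - 1) := by nlinarith
    exact div_nonneg (mul_nonneg (by linarith) this) zero_le_two
  · simp
  · have hkl' : (l : K) + 1 ≤ k := by exact_mod_cast hkl
    have : a - c * (l + k - 1) ≤ 0 := by nlinarith
    exact div_nonneg (mul_nonneg_of_nonpos_of_nonpos (by linarith) this) zero_le_two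

theorem stmt12 (m h : ℕ) (h1 : 1 ≤ h) (h2 : h ≤ m - 1)
    (S : Set ℕ) (hS : S = (AddSubmonoid.closure (Set.Icc m (m + h)) : Set ℕ))
    (lam : ℕ) (hlam : lam = (m - 2 + (2 * h - 1)) / (2 * h)) :
    lam * m ∈ S ∧ lam * m ≤ ngCond S ∧
    (∀ t ∈ S, t ≤ ngCond S → sig S t ≤ sig S (lam * m)) ∧
    sig S (lam * m) =
      (lam : ℚ) * ((m : ℚ) / 2 - 1) - (h : ℚ) * ((lam : ℚ) * ((lam : ℚ) - 1) / 2) := by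
  obtain rfl : S = intervalMonoid m h := hS
  have hm : 0 < m := by omega
  obtain ⟨hlam₁, hlam₂⟩ : m ≤ lam * (2 * h) + 2 ∧ lam * (2 * h) + 3 ≤ m + 2 * h := by
    have hle := Nat.div_mul_le_self (m - 2 + (2 * h - 1)) (2 * h)
    have hlt := Nat.lt_div_mul_add (a := m - 2 + (2 * h - 1)) (show 0 < 2 * h by omega)
    rw [← hlam] at hle hlt
    omega
  -- `q = ⌈(m - 1) / h⌉` is the number of the block in which the conductor starts
  obtain ⟨q, hq₁, hq₂⟩ : ∃ q, m ≤ q * h + 1 ∧ q * h + 1 < m + h :=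
    ⟨(m + h - 2) / h, by have := Nat.lt_div_mul_add (a := m + h - 2) h1; omega,
      by have := Nat.div_mul_le_self (m + h - 2) h; omega⟩
  have hcond := ngCond_intervalMonoid hm hq₁ hq₂
  have hlamq : lam ≤ q := by nlinarith
  have hσ := sig_intervalMonoid (t := lam * m) (by nlinarith) le_rfl
    (Nat.mul_le_mul_left lam (Nat.le_add_right m h))
  refine ⟨mem_intervalMonoid_iff.2 ⟨lam, le_rfl, Nat.mul_le_mul_left lam (Nat.le_add_right m h)⟩,
    hcond ▸ Nat.mul_le_mul_right m hlamq, fun t ht htc => ?_, by rw [hσ]; push_cast; ring⟩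
  obtain ⟨k, hk₁, hk₂⟩ := mem_intervalMonoid_iff.1 ht
  have hkq : k ≤ q := Nat.le_of_mul_le_mul_right (hk₁.trans (hcond ▸ htc)) hm
  rw [sig_intervalMonoid (by nlinarith) hk₁ hk₂, hσ]
  have hl₁ : (m : ℚ) ≤ lam * (2 * h) + 2 := by exact_mod_cast hlam₁
  have hl₂ : (lam * (2 * h) + 3 : ℚ) ≤ m + 2 * h := by exact_mod_cast hlam₂
  have hvertex := parabola_le_vertex (a := (m : ℚ) - 2) (k := k) (l := lam) h.cast_nonneg
    (by linarith) (by linarith)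
  have hkt : (k : ℚ) * m ≤ t := by exact_mod_cast hk₁
  push_cast
  linarith
end

section
/- Let m ≥ 2 and S = ⟨m, 2m-1, 3m-2, ..., (m-1)m - m + 1⟩ (the generalized Klein quartic semigroup, equivalently S = {i(m-1) + jm : i, j ∈ ℕ, j ≠ 0} ∪ {0}). Then σ attains its maximum at s := ⌈(m-1)/2⌉(m-1) + 1, and σ(s) = (1/2)·⌈(m-1)/2⌉·(⌊(m-1)/2⌋ + 1) - 1/2. -/
open scoped Classical

open Classical in
noncomputable def cnt (S : Set ℕ) (N : ℕ) : ℕ := (S ∩ Set.Iio N).ncard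

lemma cnt_zero (S : Set ℕ) : cnt S 0 = 0 := by
  have h : S ∩ Set.Iio 0 = ∅ := by ext x; simp
  simp [cnt, h]

lemma cnt_succ (S : Set ℕ) (N : ℕ) :
    cnt S (N + 1) = cnt S N + (if N ∈ S then 1 else 0) := by
  have hfin : (S ∩ Set.Iio N).Finite := Set.Finite.inter_of_right (Set.finite_Iio N) S
  by_cases h : N ∈ S
  · have he : S ∩ Set.Iio (N + 1) = insert N (S ∩ Set.Iio N) := by
      ext x
      simp only [Set.mem_inter_iff, Set.mem_Iio, Set.mem_insert_iff]
      constructor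
      · rintro ⟨h1, h2⟩
        rcases Nat.lt_succ_iff_lt_or_eq.mp h2 with h3 | h3
        · exact Or.inr ⟨h1, h3⟩
        · exact Or.inl h3
      · rintro (rfl | ⟨h1, h2⟩)
        · exact ⟨h, Nat.lt_succ_self _⟩
        · exact ⟨h1, by omega⟩
    rw [show cnt S (N+1) = (S ∩ Set.Iio (N+1)).ncard from rfl, he,
      Set.ncard_insert_of_notMem (by simp) hfin]
    simp [cnt, h]
  · have he : S ∩ Set.Iio (N + 1) = S ∩ Set.Iio N := by
      ext x
      simp only [Set.mem_inter_iff, Set.mem_Iio]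
      constructor
      · rintro ⟨h1, h2⟩
        refine ⟨h1, ?_⟩
        rcases Nat.lt_succ_iff_lt_or_eq.mp h2 with h3 | h3
        · exact h3
        · exact absurd (h3 ▸ h1) h
      · rintro ⟨h1, h2⟩; exact ⟨h1, by omega⟩
    simp [cnt, he, h]

lemma cnt_all_mem (S : Set ℕ) {a b : ℕ} (hab : a ≤ b)
    (h : ∀ n, a ≤ n → n < b → n ∈ S) : cnt S b = cnt S a + (b - a) := by
  induction b, hab using Nat.le_induction with
  | base => simp
  | succ b hb ih =>
    rw [cnt_succ, ih (fun n h1 h2 => h n h1 (by omega)), if_pos (h b hb (by omega))]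
    omega

lemma cnt_all_notMem (S : Set ℕ) {a b : ℕ} (hab : a ≤ b)
    (h : ∀ n, a ≤ n → n < b → n ∉ S) : cnt S b = cnt S a := by
  induction b, hab using Nat.le_induction with
  | base => rfl
  | succ b hb ih =>
    rw [cnt_succ, ih (fun n h1 h2 => h n h1 (by omega)), if_neg (h b hb (by omega))]
    omega

lemma ncard_Icc_eq_cnt (S : Set ℕ) (N : ℕ) :
    (S ∩ Set.Icc 0 N).ncard = cnt S (N + 1) := by
  have h : Set.Icc 0 N = Set.Iio (N + 1) := by ext x; simp [Nat.lt_succ_iff]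
  rw [show cnt S (N+1) = (S ∩ Set.Iio (N+1)).ncard from rfl, h]

lemma aux_mem (k : ℕ) (S : Set ℕ)
    (hmem : ∀ n, n ∈ S ↔ n = 0 ∨ ∃ d j : ℕ, 1 ≤ j ∧ j ≤ d ∧ n = d * k + j)
    (d j : ℕ) (hj1 : 1 ≤ j) (hjd : j ≤ d) : d * k + j ∈ S :=
  (hmem _).mpr (Or.inr ⟨d, j, hj1, hjd, rfl⟩)

lemma aux_notmem (k : ℕ) (S : Set ℕ)
    (hmem : ∀ n, n ∈ S ↔ n = 0 ∨ ∃ d j : ℕ, 1 ≤ j ∧ j ≤ d ∧ n = d * k + j)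
    (d j : ℕ) (hdk : d ≤ k) (hdj : d < j) (hjk : j ≤ k) : d * k + j ∉ S := by
  intro h
  rcases (hmem _).mp h with h0 | ⟨d', j', hj'1, hj'd, he⟩
  · omega
  rcases le_or_gt d' d with hle | hlt
  · have h1 : d' * k ≤ d * k := Nat.mul_le_mul_right k hle
    omega
  · have h1 : (d + 1) * k ≤ d' * k := Nat.mul_le_mul_right k hlt
    have h2 : (d + 1) * k = d * k + k := by ring
    omega

lemma aux_cnt_left (k : ℕ) (hk : 1 ≤ k) (S : Set ℕ)
    (hmem : ∀ n, n ∈ S ↔ n = 0 ∨ ∃ d j : ℕ, 1 ≤ j ∧ j ≤ d ∧ n = d * k + j) :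
    ∀ d, 1 ≤ d → d ≤ k → cnt S (d * k + 2) = 2 + ∑ i ∈ Finset.range d, i := by
  intro d hd1
  induction d, hd1 using Nat.le_induction with
  | base =>
    intro _
    have h1 : cnt S 1 = 1 := by
      rw [show (1:ℕ) = 0 + 1 from rfl, cnt_succ, cnt_zero,
        if_pos ((hmem 0).mpr (Or.inl rfl))]
    have h2 : cnt S (k + 1) = cnt S 1 := by
      apply cnt_all_notMem S (by omega)
      intro n hn1 hn2
      simpa using aux_notmem k S hmem 0 n (by omega) (by omega) (by omega)
    have hm1 : k + 1 ∈ S := by simpa using aux_mem k S hmem 1 1 le_rfl le_rfl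
    have h3 : cnt S (k + 2) = cnt S (k + 1) + 1 := by
      rw [show k + 2 = (k + 1) + 1 from rfl, cnt_succ, if_pos hm1]
    have : (1:ℕ) * k + 2 = k + 2 := by ring
    rw [this]
    simp [h3, h2, h1]
  | succ d hd1 ih =>
    intro hdk
    have hdk' : d ≤ k := by omega
    have hkk : (d + 1) * k = d * k + k := by ring
    have e1 : cnt S (d * k + 2 + (d - 1)) = cnt S (d * k + 2) + (d - 1) := by
      have h := cnt_all_mem S (show d * k + 2 ≤ d * k + 2 + (d - 1) by omega)
        (fun n h1 h2 => by
          have hn : n = d * k + (n - d * k) := by omega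
          rw [hn]
          exact aux_mem k S hmem d (n - d * k) (by omega) (by omega))
      omega
    have e2 : cnt S ((d + 1) * k + 1) = cnt S (d * k + 2 + (d - 1)) := by
      apply cnt_all_notMem S (show d * k + 2 + (d - 1) ≤ (d + 1) * k + 1 by omega)
      intro n h1 h2
      have hn : n = d * k + (n - d * k) := by omega
      rw [hn]
      exact aux_notmem k S hmem d (n - d * k) hdk' (by omega) (by omega)
    have e3 : cnt S ((d + 1) * k + 2) = cnt S ((d + 1) * k + 1) + 1 := by
      rw [show (d + 1) * k + 2 = ((d + 1) * k + 1) + 1 from rfl, cnt_succ,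
        if_pos (aux_mem k S hmem (d + 1) 1 le_rfl (by omega))]
    rw [e3, e2, e1, ih hdk', Finset.sum_range_succ]
    omega

lemma aux_cnt_block (k : ℕ) (S : Set ℕ)
    (hmem : ∀ n, n ∈ S ↔ n = 0 ∨ ∃ d j : ℕ, 1 ≤ j ∧ j ≤ d ∧ n = d * k + j)
    (d r : ℕ) (hr : r < d) :
    cnt S (d * k + 2 + r) = cnt S (d * k + 2) + r := by
  have := cnt_all_mem S (show d * k + 2 ≤ d * k + 2 + r by omega) (fun n h1 h2 => by
    have hn : n = d * k + (n - d * k) := by omega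
    rw [hn]
    exact aux_mem k S hmem d (n - d * k) (by omega) (by omega))
  omega

lemma aux_sig (k : ℕ) (hk : 1 ≤ k) (S : Set ℕ)
    (hmem : ∀ n, n ∈ S ↔ n = 0 ∨ ∃ d j : ℕ, 1 ≤ j ∧ j ≤ d ∧ n = d * k + j)
    (d r : ℕ) (hd1 : 1 ≤ d) (hdk : d ≤ k) (hr : r < d) :
    sig S (d * k + 1 + r) = ((d : ℚ) * ((k : ℚ) + 1 - d) - 1) / 2 - (r : ℚ) / 2 := by
  have h1 : (S ∩ Set.Icc 0 (d * k + 1 + r)).ncard = 2 + (∑ i ∈ Finset.range d, i) + r := by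
    rw [ncard_Icc_eq_cnt, show d * k + 1 + r + 1 = d * k + 2 + r by omega,
      aux_cnt_block k S hmem d r hr, aux_cnt_left k hk S hmem d hd1 hdk]
  have hsum : (∑ i ∈ Finset.range d, (i : ℚ)) * 2 = (d : ℚ) * ((d : ℚ) - 1) := by
    have h := congrArg (Nat.cast : ℕ → ℚ) (Finset.sum_range_id_mul_two d)
    push_cast [Nat.cast_sub hd1] at h
    linarith [h]
  unfold sig
  rw [h1]
  push_cast
  linear_combination (-(1:ℚ)/2) * hsum

theorem stmt13 (m : ℕ) (hm : 2 ≤ m)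
    (S : Set ℕ)
    (hS : S = {0} ∪ {n : ℕ | ∃ i j : ℕ, j ≠ 0 ∧ n = i * (m - 1) + j * m})
    (s : ℕ) (hs : s = ((m - 1 + 1) / 2) * (m - 1) + 1) :
    s ∈ S ∧ s ≤ ngCond S ∧
    (∀ t ∈ S, t ≤ ngCond S → sig S t ≤ sig S s) ∧
    sig S s = (1 / 2 : ℚ) * (((m - 1 + 1) / 2 : ℕ) : ℚ) * ((((m - 1) / 2 : ℕ) : ℚ) + 1)
      - 1 / 2 := by
  obtain ⟨k, rfl⟩ : ∃ k, m = k + 1 := ⟨m - 1, by omega⟩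
  have hk : 1 ≤ k := by omega
  simp only [Nat.add_sub_cancel] at hs hS ⊢
  set q := (k + 1) / 2 with hqdef
  have hq1 : 1 ≤ q := by omega
  have hqk : q ≤ k := by omega
  -- membership characterization
  have hmem : ∀ n, n ∈ S ↔ n = 0 ∨ ∃ d j : ℕ, 1 ≤ j ∧ j ≤ d ∧ n = d * k + j := by
    intro n
    rw [hS]
    simp only [Set.mem_union, Set.mem_singleton_iff, Set.mem_setOf_eq]
    constructor
    · rintro (h0 | ⟨i, j, hj, rfl⟩)
      · exact Or.inl h0
      · refine Or.inr ⟨i + j, j, by omega, by omega, by ring⟩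
    · rintro (h0 | ⟨d, j, hj1, hjd, rfl⟩)
      · exact Or.inl h0
      · obtain ⟨i, rfl⟩ : ∃ i, d = j + i := ⟨d - j, by omega⟩
        exact Or.inr ⟨i, j, by omega, by ring⟩
  -- s ∈ S
  have hsmem : s ∈ S := by
    rw [hs]
    exact aux_mem k S hmem q 1 le_rfl hq1
  -- conductor facts
  have hA : (k * k + 1) ∈ {c : ℕ | ∀ n, c ≤ n → n ∈ S} := by
    intro n hn
    have hmod : (n - 1) % k < k := Nat.mod_lt _ (by omega)
    have hdm := Nat.div_add_mod (n - 1) k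
    have hdk : k ≤ (n - 1) / k := (Nat.le_div_iff_mul_le (by omega)).mpr (by omega)
    have hn' : n = ((n - 1) / k) * k + ((n - 1) % k + 1) := by
      have : k * ((n - 1) / k) = ((n - 1) / k) * k := Nat.mul_comm _ _
      omega
    rw [hn']
    exact aux_mem k S hmem _ _ (by omega) (by omega)
  have hng_le : ngCond S ≤ k * k + 1 := Nat.sInf_le hA
  have hkk_notmem : k * k ∉ S := by
    have h1 : k * k = (k - 1) * k + k := by
      obtain ⟨k', rfl⟩ : ∃ k', k = k' + 1 := ⟨k - 1, by omega⟩
      simp only [Nat.add_sub_cancel]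
      ring
    rw [h1]
    exact aux_notmem k S hmem (k - 1) k (by omega) (by omega) le_rfl
  have hng_ge : s ≤ ngCond S := by
    apply le_csInf ⟨_, hA⟩
    intro c hc
    by_contra hlt
    push_neg at hlt
    have hcs : c ≤ k * k := by
      have : s ≤ k * k + 1 := by
        have : q * k ≤ k * k := Nat.mul_le_mul_right k hqk
        omega
      omega
    exact hkk_notmem (hc _ hcs)
  -- sig value at s
  have hsig_s : sig S s = ((q : ℚ) * ((k : ℚ) + 1 - q) - 1) / 2 := by
    rw [hs, aux_sig k hk S hmem q 0 hq1 hqk hq1]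
    simp
  refine ⟨hsmem, hng_ge, ?_, ?_⟩
  · -- maximality
    intro t ht htle
    have htc : t ≤ k * k + 1 := le_trans htle hng_le
    rcases (hmem t).mp ht with rfl | ⟨d, j, hj1, hjd, rfl⟩
    · -- t = 0
      have h0 : (S ∩ Set.Icc 0 0).ncard = 1 := by
        have he : S ∩ Set.Icc 0 0 = {0} := by
          ext x
          simp only [Set.mem_inter_iff, Set.mem_Icc, Set.mem_singleton_iff]
          constructor
          · rintro ⟨_, _, h⟩; omega
          · rintro rfl; exact ⟨(hmem 0).mpr (Or.inl rfl), le_rfl, le_rfl⟩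
        rw [he, Set.ncard_singleton]
      rw [hsig_s]
      unfold sig
      rw [h0]
      have hQ1 : (1 : ℚ) ≤ (q : ℚ) := by exact_mod_cast hq1
      have hQk : (q : ℚ) ≤ (k : ℚ) := by exact_mod_cast hqk
      have : (1 : ℚ) ≤ (q : ℚ) * ((k : ℚ) + 1 - q) := by nlinarith
      push_cast
      linarith
    · -- t = d*k + j
      have hd1 : 1 ≤ d := le_trans hj1 hjd
      have hdk : d ≤ k := by
        by_contra hdk'
        have h1 : (k + 1) * k ≤ d * k := Nat.mul_le_mul_right k (by omega)
        have h2 : (k + 1) * k = k * k + k := by ring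
        omega
      rw [show d * k + j = d * k + 1 + (j - 1) by omega,
        aux_sig k hk S hmem d (j - 1) hd1 hdk (by omega), hsig_s]
      have hl : (k : ℚ) ≤ 2 * (q : ℚ) := by exact_mod_cast (show k ≤ 2 * q by omega)
      have hh : 2 * (q : ℚ) ≤ (k : ℚ) + 1 := by exact_mod_cast (show 2 * q ≤ k + 1 by omega)
      have hr0 : (0 : ℚ) ≤ ((j - 1 : ℕ) : ℚ) := Nat.cast_nonneg _
      have key : (d : ℚ) * ((k : ℚ) + 1 - d) ≤ (q : ℚ) * ((k : ℚ) + 1 - q) := by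
        rcases le_or_gt d q with h | h
        · have hD : (d : ℚ) ≤ (q : ℚ) := by exact_mod_cast h
          nlinarith [mul_nonneg (by linarith : (0:ℚ) ≤ (q : ℚ) - d)
            (by linarith : (0:ℚ) ≤ (k : ℚ) + 1 - q - d)]
        · have hD : (q : ℚ) + 1 ≤ (d : ℚ) := by exact_mod_cast h
          nlinarith [mul_nonneg (by linarith : (0:ℚ) ≤ (d : ℚ) - q)
            (by linarith : (0:ℚ) ≤ (d : ℚ) + q - k - 1)]
      linarith
  · -- final value
    rw [hsig_s]
    have h2 : ((k / 2 : ℕ) : ℚ) = (k : ℚ) - (q : ℚ) := by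
      have hh : k / 2 + q = k := by omega
      have := congrArg (Nat.cast : ℕ → ℚ) hh
      push_cast at this
      linarith
    rw [h2]
    ring
end

section
/- Let q, m, r be positive integers with q + 1 = r·m and let S = ⟨m, q⟩. Then S = {λ₁ m - λ₂ : λ₁, λ₂ ∈ ℕ, 0 ≤ r·λ₂ ≤ λ₁}. -/
theorem stmt14 (q m r : ℕ) (hq : 1 ≤ q) (hm : 1 ≤ m) (hr : 1 ≤ r)
    (hqm : q + 1 = r * m) :
    ∀ n : ℕ, n ∈ AddSubmonoid.closure ({m, q} : Set ℕ) ↔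
      ∃ l1 l2 : ℕ, r * l2 ≤ l1 ∧ n + l2 = l1 * m := by
  intro n
  rw [AddSubmonoid.mem_closure_pair]
  constructor
  · rintro ⟨a, b, rfl⟩
    refine ⟨a + b * r, b, by nlinarith, ?_⟩
    simp only [smul_eq_mul]
    nlinarith
  · rintro ⟨l1, l2, hle, heq⟩
    refine ⟨l1 - r * l2, l2, ?_⟩
    simp only [smul_eq_mul]
    have h1 : (l1 - r * l2) * m = l1 * m - r * l2 * m := Nat.sub_mul _ _ _
    have h2 : l2 * q + l2 = r * l2 * m := by nlinarith
    have h3 : r * l2 * m ≤ l1 * m := Nat.mul_le_mul_right _ hle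
    omega
end

section
/- Let q₀ = 2^h with h ≥ 1, q = 2q₀², and let S = ⟨q, q+q₀, q+2q₀, q+2q₀+1⟩ be the Suzuki semigroup. Then S = {λ₁ q + λ₂ q₀ + λ₃ : λ₁, λ₂, λ₃ ∈ ℕ, 0 ≤ 2λ₃ ≤ λ₂ ≤ 2λ₁}. -/
theorem AddSubmonoid.mem_closure_insert {A : Type*} [AddCommMonoid A] {x y : A} {s : Set A} :
    y ∈ closure (insert x s) ↔ ∃ n : ℕ, ∃ z ∈ closure s, n • x + z = y := by
  rw [← Set.singleton_union, closure_union, mem_sup]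
  simp_rw [mem_closure_singleton, exists_exists_eq_and]

theorem AddSubmonoid.mem_closure_four {A : Type*} [AddCommMonoid A] (a b c d y : A) :
    y ∈ closure ({a, b, c, d} : Set A) ↔
      ∃ k l m n : ℕ, k • a + l • b + m • c + n • d = y := by
  simp only [mem_closure_insert, mem_closure_singleton, exists_exists_eq_and,
    exists_exists_exists_and_eq, ↓existsAndEq, true_and, add_assoc]

theorem Nat.exists_coeffs_of_two_mul_le_of_le_two_mul {l1 l2 l3 : ℕ} (h3 : 2 * l3 ≤ l2)
    (h2 : l2 ≤ 2 * l1) :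
    ∃ a b c d : ℕ, a + b + c + d = l1 ∧ b + 2 * c + 2 * d = l2 ∧ d = l3 :=
  ⟨l1 - (l2 - 2 * l3) / 2 - (l2 - 2 * l3) % 2 - l3, (l2 - 2 * l3) % 2, (l2 - 2 * l3) / 2, l3,
    by omega, by omega, rfl⟩

theorem stmt16_general (q0 q : ℕ) :
    ∀ n : ℕ,
      n ∈ AddSubmonoid.closure ({q, q + q0, q + 2 * q0, q + 2 * q0 + 1} : Set ℕ) ↔
      ∃ l1 l2 l3 : ℕ, 2 * l3 ≤ l2 ∧ l2 ≤ 2 * l1 ∧ n = l1 * q + l2 * q0 + l3 := by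
  intro n
  simp only [AddSubmonoid.mem_closure_four, smul_eq_mul]
  constructor
  · rintro ⟨a, b, c, d, rfl⟩
    exact ⟨a + b + c + d, b + 2 * c + 2 * d, d, by omega, by omega, by ring⟩
  · rintro ⟨l1, l2, l3, h3, h2, rfl⟩
    obtain ⟨a, b, c, d, rfl, rfl, rfl⟩ := Nat.exists_coeffs_of_two_mul_le_of_le_two_mul h3 h2
    exact ⟨a, b, c, d, by ring⟩

theorem stmt16 (h q0 q : ℕ) (hh : 1 ≤ h) (hq0 : q0 = 2 ^ h) (hq : q = 2 * q0 ^ 2) :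
    ∀ n : ℕ,
      n ∈ AddSubmonoid.closure ({q, q + q0, q + 2 * q0, q + 2 * q0 + 1} : Set ℕ) ↔
      ∃ l1 l2 l3 : ℕ, 2 * l3 ≤ l2 ∧ l2 ≤ 2 * l1 ∧ n = l1 * q + l2 * q0 + l3 :=
  stmt16_general q0 q
end

section
/- Let q₀ = 2^h with h ≥ 1, q = 2q₀², and S = ⟨q, q+q₀, q+2q₀, q+2q₀+1⟩ the Suzuki semigroup (with genus g = q₀(q-1)). Then σ attains its maximum over S ∩ [0, c(S)] at s := (q₀-1)(q+q₀) = g - q/2, and σ(s) = (q₀/12)(4q - 3q₀ - 8). -/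
namespace Suzuki

/-- Membership in `S` for `q₀ = r`, in terms of the digits `A = n / q`, `B = n % q / r`,
`e = n % r` of `n` (`q = 2 r²`). -/
def Mem (r n : ℕ) : Prop :=
  n % (2 * r ^ 2) / r ≤ 2 * (n / (2 * r ^ 2)) ∧
    (2 * (n % r) ≤ n % (2 * r ^ 2) / r ∨
      n % (2 * r ^ 2) / r + 2 * r + 2 ≤ 2 * (n / (2 * r ^ 2)))

instance (r : ℕ) : DecidablePred (Mem r) := fun _ => by unfold Mem; infer_instance

def conductor (r : ℕ) : ℕ := 2 * r * (2 * r ^ 2 - 1)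

variable {r : ℕ}

section Digits

theorem div_mod_of_digits (hr : 0 < r) {A B e : ℕ} (hB : B < 2 * r) (he : e < r) :
    (A * (2 * r ^ 2) + B * r + e) / (2 * r ^ 2) = A ∧
    (A * (2 * r ^ 2) + B * r + e) % (2 * r ^ 2) / r = B ∧
    (A * (2 * r ^ 2) + B * r + e) % r = e := by
  have hlt : B * r + e < 2 * r ^ 2 := by nlinarith
  have hq : A * (2 * r ^ 2) + B * r + e = (B * r + e) + A * (2 * r ^ 2) := by ring
  refine ⟨?_, ?_, ?_⟩
  · rw [hq, Nat.add_mul_div_right _ _ (by positivity), Nat.div_eq_of_lt hlt, zero_add]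
  · rw [hq, Nat.add_mul_mod_self_right, Nat.mod_eq_of_lt hlt, add_comm,
      Nat.add_mul_div_right _ _ hr, Nat.div_eq_of_lt he, zero_add]
  · rw [show A * (2 * r ^ 2) + B * r + e = e + (A * (2 * r) + B) * r by ring,
      Nat.add_mul_mod_self_right, Nat.mod_eq_of_lt he]

theorem exists_digits (hr : 0 < r) (n : ℕ) :
    ∃ A B e, B < 2 * r ∧ e < r ∧ n = A * (2 * r ^ 2) + B * r + e := by
  refine ⟨n / (2 * r ^ 2), n % (2 * r ^ 2) / r, n % r, ?_, Nat.mod_lt n hr, ?_⟩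
  · exact Nat.div_lt_of_lt_mul ((Nat.mod_lt n (by positivity)).trans_le (le_of_eq (by ring)))
  · have hmod : n % (2 * r ^ 2) % r = n % r := Nat.mod_mod_of_dvd n ⟨2 * r, by ring⟩
    have hlow := Nat.div_add_mod (n % (2 * r ^ 2)) r
    rw [hmod] at hlow
    calc n = 2 * r ^ 2 * (n / (2 * r ^ 2)) + n % (2 * r ^ 2) := (Nat.div_add_mod n _).symm
      _ = 2 * r ^ 2 * (n / (2 * r ^ 2)) + (r * (n % (2 * r ^ 2) / r) + n % r) := by rw [hlow]
      _ = _ := by ring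

theorem mem_digits_iff (hr : 0 < r) {A B e : ℕ} (hB : B < 2 * r) (he : e < r) :
    Mem r (A * (2 * r ^ 2) + B * r + e) ↔
      B ≤ 2 * A ∧ (2 * e ≤ B ∨ B + 2 * r + 2 ≤ 2 * A) := by
  obtain ⟨hA, hB', he'⟩ := div_mod_of_digits (A := A) hr hB he
  rw [Mem, hA, hB', he']

theorem digits_lt_succ {A B e : ℕ} (hB : B < 2 * r) (he : e < r) :
    A * (2 * r ^ 2) + B * r + e < (A + 1) * (2 * r ^ 2) := by
  nlinarith

end Digits

section Closure

theorem mem_of_repr (hr : 0 < r) :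
    ∀ B A e, 2 * e ≤ B → B ≤ 2 * A → Mem r (A * (2 * r ^ 2) + B * r + e) := by
  intro B
  induction B using Nat.strong_induction_on with
  | _ B ih =>
    intro A e heB hBA
    by_cases hB : B < 2 * r
    · exact (mem_digits_iff hr hB (by omega)).2 ⟨hBA, Or.inl heB⟩
    obtain ⟨B, rfl⟩ : ∃ B', B = B' + 2 * r := ⟨B - 2 * r, by omega⟩
    by_cases he : r ≤ e
    · obtain ⟨e, rfl⟩ : ∃ e', e = e' + r := ⟨e - r, by omega⟩
      convert ih (B + 1) (by omega) (A + 1) e (by omega) (by omega) using 1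
      ring
    rw [show A * (2 * r ^ 2) + (B + 2 * r) * r + e = (A + 1) * (2 * r ^ 2) + B * r + e by ring]
    by_cases heB' : 2 * e ≤ B
    · exact ih B (by omega) (A + 1) e heB' (by omega)
    · exact (mem_digits_iff hr (by omega) (by omega)).2 ⟨by omega, Or.inr (by omega)⟩

theorem mem_iff_exists_repr (hr : 0 < r) (n : ℕ) :
    Mem r n ↔ ∃ A B e, 2 * e ≤ B ∧ B ≤ 2 * A ∧ n = A * (2 * r ^ 2) + B * r + e := by
  refine ⟨fun hn => ?_, fun ⟨A, B, e, heB, hBA, hn⟩ => hn ▸ mem_of_repr hr B A e heB hBA⟩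
  obtain ⟨A, B, e, hB, he, rfl⟩ := exists_digits hr n
  obtain ⟨hBA, heB | hfull⟩ := (mem_digits_iff hr hB he).1 hn
  · exact ⟨A, B, e, heB, hBA, rfl⟩
  · -- borrow one `q` from the first digit
    obtain ⟨A, rfl⟩ : ∃ A', A = A' + 1 := ⟨A - 1, by omega⟩
    exact ⟨A, B + 2 * r, e, by omega, by omega, by ring⟩

theorem mem_closure_iff_exists_repr (n : ℕ) :
    n ∈ AddSubmonoid.closure
        ({2 * r ^ 2, 2 * r ^ 2 + r, 2 * r ^ 2 + 2 * r, 2 * r ^ 2 + 2 * r + 1} : Set ℕ) ↔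
      ∃ A B e, 2 * e ≤ B ∧ B ≤ 2 * A ∧ n = A * (2 * r ^ 2) + B * r + e := by
  set X : Set ℕ := {2 * r ^ 2, 2 * r ^ 2 + r, 2 * r ^ 2 + 2 * r, 2 * r ^ 2 + 2 * r + 1}
  constructor
  · intro hn
    induction hn using AddSubmonoid.closure_induction with
    | mem x hx =>
      simp only [X, Set.mem_insert_iff, Set.mem_singleton_iff] at hx
      rcases hx with rfl | rfl | rfl | rfl
      exacts [⟨1, 0, 0, le_rfl, by omega, by ring⟩, ⟨1, 1, 0, by omega, by omega, by ring⟩,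
        ⟨1, 2, 0, by omega, le_rfl, by ring⟩, ⟨1, 2, 1, le_rfl, le_rfl, by ring⟩]
    | zero => exact ⟨0, 0, 0, le_rfl, le_rfl, by ring⟩
    | add x y _ _ hx hy =>
      obtain ⟨A, B, e, h1, h2, rfl⟩ := hx
      obtain ⟨A', B', e', h1', h2', rfl⟩ := hy
      exact ⟨A + A', B + B', e + e', by omega, by omega, by ring⟩
  · rintro ⟨A, B, e, heB, hBA, rfl⟩
    have gen : ∀ k g, g ∈ X → k * g ∈ AddSubmonoid.closure X := fun k g hg => by
      simpa using (AddSubmonoid.closure X).nsmul_mem (AddSubmonoid.subset_closure hg) k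
    -- n = a q + b (q + r) + c (q + 2r) + e (q + 2r + 1) with b + 2c = B - 2e, a + b + c + e = A
    obtain ⟨b, c, hbc, hb⟩ : ∃ b c, b + 2 * c + 2 * e = B ∧ b ≤ 1 :=
      ⟨(B - 2 * e) % 2, (B - 2 * e) / 2, by omega, by omega⟩
    obtain ⟨a, ha⟩ : ∃ a, a + b + c + e = A := ⟨A - b - c - e, by omega⟩
    rw [← hbc, ← ha, show (a + b + c + e) * (2 * r ^ 2) + (b + 2 * c + 2 * e) * r + e =
      a * (2 * r ^ 2) + b * (2 * r ^ 2 + r) + c * (2 * r ^ 2 + 2 * r) +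
        e * (2 * r ^ 2 + 2 * r + 1) by ring]
    exact add_mem (add_mem (add_mem (gen a _ (by simp [X])) (gen b _ (by simp [X])))
      (gen c _ (by simp [X]))) (gen e _ (by simp [X]))

theorem coe_closure_eq (hr : 0 < r) :
    (AddSubmonoid.closure
        ({2 * r ^ 2, 2 * r ^ 2 + r, 2 * r ^ 2 + 2 * r, 2 * r ^ 2 + 2 * r + 1} : Set ℕ) :
        Set ℕ) = {n | Mem r n} := by
  ext n
  exact (mem_closure_iff_exists_repr n).trans (mem_iff_exists_repr hr n).symm

end Closure

section Symmetry

theorem cast_conductor (hr : 0 < r) : (conductor r : ℤ) = 4 * r ^ 3 - 2 * r := by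
  have : 1 ≤ 2 * r ^ 2 := by nlinarith
  rw [conductor]; push_cast [this]; ring

theorem mem_iff_not_mem (hr : 0 < r) {t t' : ℕ} (htt' : t + t' + 1 = conductor r) :
    Mem r t ↔ ¬ Mem r t' := by
  obtain ⟨A, B, e, hB, he, rfl⟩ := exists_digits hr t
  have hsum : (A * (2 * r ^ 2) + B * r + e + t' + 1 : ℤ) = 4 * r ^ 3 - 2 * r := by
    rw [← cast_conductor hr, ← htt']; push_cast; ring
  have hA : A < 2 * r := by
    by_contra! hA
    have : (2 * r : ℤ) * (2 * r ^ 2) ≤ A * (2 * r ^ 2) := by gcongr; exact_mod_cast hA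
    nlinarith
  -- the digits of `t'` are those of `c - 1 - t`, with a borrow when `B ≥ 2r - 2`
  obtain ⟨A', B', e', hB', he', hAB, hee'⟩ : ∃ A' B' e', B' < 2 * r ∧ e' < r ∧
      ((A + A' + 1 = 2 * r ∧ B + B' + 3 = 2 * r) ∨
        (A + A' + 2 = 2 * r ∧ B + B' + 3 = 4 * r)) ∧
      e + e' + 1 = r := by
    by_cases hB3 : B + 3 ≤ 2 * r
    · exact ⟨2 * r - 1 - A, 2 * r - 3 - B, r - 1 - e, by omega, by omega,
        Or.inl ⟨by omega, by omega⟩, by omega⟩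
    · have hA2 : A + 2 ≤ 2 * r := by
        by_contra! hA2
        have hA1 : (A : ℤ) = 2 * r - 1 := by omega
        have : (2 * r - 2 : ℤ) * r ≤ B * r := by gcongr; omega
        rw [hA1] at hsum
        nlinarith
      exact ⟨2 * r - 2 - A, 4 * r - 3 - B, r - 1 - e, by omega, by omega,
        Or.inr ⟨by omega, by omega⟩, by omega⟩
  have ht' : (t' : ℤ) = A' * (2 * r ^ 2) + B' * r + e' := by
    rcases hAB with ⟨h1, h2⟩ | ⟨h1, h2⟩
    · have h1 : (A + A' + 1 : ℤ) = 2 * r := by exact_mod_cast h1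
      have h2 : (B + B' + 3 : ℤ) = 2 * r := by exact_mod_cast h2
      have h3 : (e + e' + 1 : ℤ) = r := by exact_mod_cast hee'
      linear_combination hsum - (2 * r ^ 2) * h1 - r * h2 - h3
    · have h1 : (A + A' + 2 : ℤ) = 2 * r := by exact_mod_cast h1
      have h2 : (B + B' + 3 : ℤ) = 4 * r := by exact_mod_cast h2
      have h3 : (e + e' + 1 : ℤ) = r := by exact_mod_cast hee'
      linear_combination hsum - (2 * r ^ 2) * h1 - r * h2 - h3
  rw [show t' = A' * (2 * r ^ 2) + B' * r + e' by exact_mod_cast ht', mem_digits_iff hr hB he,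
    mem_digits_iff hr hB' he']
  omega

theorem mem_of_conductor_le (hr : 0 < r) {n : ℕ} (hn : conductor r ≤ n) : Mem r n := by
  obtain ⟨A, B, e, hB, he, rfl⟩ := exists_digits hr n
  have hc := cast_conductor hr
  have hn' : (4 * r ^ 3 - 2 * r : ℤ) ≤ A * (2 * r ^ 2) + B * r + e := by
    rw [← hc]; exact_mod_cast hn
  have hA : 2 * r ≤ A + 1 := by
    by_contra! hA
    have hlt : (A * (2 * r ^ 2) + B * r + e : ℤ) < (A + 1) * (2 * r ^ 2) := by
      exact_mod_cast digits_lt_succ hB he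
    have : ((A : ℤ) + 1) * (2 * r ^ 2) ≤ (2 * r - 1) * (2 * r ^ 2) := by
      gcongr; omega
    nlinarith
  have hB' : 2 * r ≤ A ∨ 2 * r ≤ B + 2 := by
    by_contra! hB'
    have hA1 : (A : ℤ) = 2 * r - 1 := by omega
    have : (B : ℤ) * r ≤ (2 * r - 3) * r := by gcongr; omega
    rw [hA1] at hn'
    nlinarith
  rw [mem_digits_iff hr hB he]
  omega

theorem zero_mem (hr : 0 < r) : Mem r 0 := by
  simpa using mem_of_repr hr 0 0 0 le_rfl le_rfl

theorem ngCond_eq (hr : 0 < r) : ngCond {n | Mem r n} = conductor r := by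
  have hc : 0 < conductor r := Nat.mul_pos (by omega) (Nat.sub_pos_of_lt (by nlinarith))
  have hgap : ¬ Mem r (conductor r - 1) := (mem_iff_not_mem hr (by omega)).1 (zero_mem hr)
  refine le_antisymm (Nat.sInf_le fun n hn => mem_of_conductor_le hr hn)
    (le_csInf ⟨_, fun n hn => mem_of_conductor_le hr hn⟩ fun k hk => ?_)
  by_contra! hk'
  exact hgap (hk _ (by omega))

end Symmetry

section Counting

def excess (r x : ℕ) : ℤ := 2 * Nat.count (Mem r) x - x

theorem count_conductor_add_count (hr : 0 < r) {x : ℕ} (hx : x ≤ conductor r) :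
    Nat.count (Mem r) (conductor r) + Nat.count (Mem r) x =
      Nat.count (Mem r) (conductor r - x) + x := by
  induction x with
  | zero => simp
  | succ x ih =>
    have hsym := mem_iff_not_mem hr (t := x) (t' := conductor r - (x + 1)) (by omega)
    rw [Nat.count_succ, ← add_assoc, ih (by omega),
      show conductor r - x = conductor r - (x + 1) + 1 by omega, Nat.count_succ]
    split_ifs <;> first | omega | tauto

theorem excess_conductor_sub (hr : 0 < r) {x : ℕ} (hx : x ≤ conductor r) :
    excess r (conductor r - x) = excess r x := by
  have hx' := count_conductor_add_count hr hx
  have hc := count_conductor_add_count hr le_rfl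
  rw [Nat.sub_self, Nat.count_zero] at hc
  unfold excess
  push_cast [hx]
  omega

end Counting

section LowRows

variable {A B : ℕ}

theorem mem_low_iff (hA : A < r) (hB : B < 2 * r) {e : ℕ} (he : e < r) :
    Mem r (A * (2 * r ^ 2) + B * r + e) ↔ 2 * e ≤ B ∧ B ≤ 2 * A := by
  rw [mem_digits_iff (by omega) hB he]
  omega

theorem count_block (hA : A < r) (hB : B < 2 * r) {e : ℕ} (he : e ≤ r) :
    Nat.count (Mem r) (A * (2 * r ^ 2) + B * r + e) =
      Nat.count (Mem r) (A * (2 * r ^ 2) + B * r) +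
        if B ≤ 2 * A then min e (B / 2 + 1) else 0 := by
  induction e with
  | zero => simp
  | succ e ih =>
    rw [← add_assoc, Nat.count_succ, ih (by omega)]
    simp only [mem_low_iff hA hB (show e < r by omega)]
    split_ifs <;> omega

theorem quarterSq_succ (B : ℕ) : (B + 1 + 1) ^ 2 / 4 = (B + 1) ^ 2 / 4 + (B / 2 + 1) := by
  rcases Nat.even_or_odd' B with ⟨u, rfl | rfl⟩
  · rw [show (2 * u + 1 + 1) ^ 2 = 4 * u ^ 2 + 8 * u + 4 by ring,
      show (2 * u + 1) ^ 2 = 4 * u ^ 2 + 4 * u + 1 by ring]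
    omega
  · rw [show (2 * u + 1 + 1 + 1) ^ 2 = 4 * u ^ 2 + 12 * u + 9 by ring,
      show (2 * u + 1 + 1) ^ 2 = 4 * u ^ 2 + 8 * u + 4 by ring]
    omega

theorem count_row (hA : A < r) (hB : B ≤ 2 * r) :
    Nat.count (Mem r) (A * (2 * r ^ 2) + B * r) =
      Nat.count (Mem r) (A * (2 * r ^ 2)) + (min B (2 * A + 1) + 1) ^ 2 / 4 := by
  induction B with
  | zero => simp
  | succ B ih =>
    rw [show A * (2 * r ^ 2) + (B + 1) * r = A * (2 * r ^ 2) + B * r + r by ring,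
      count_block hA (by omega) le_rfl, ih (by omega)]
    split_ifs with hBA
    · rw [min_eq_left (by omega : B + 1 ≤ 2 * A + 1), min_eq_left (by omega : B ≤ 2 * A + 1),
        min_eq_right (by omega : B / 2 + 1 ≤ r), quarterSq_succ, add_assoc]
    · rw [min_eq_right (by omega : 2 * A + 1 ≤ B + 1), min_eq_right (by omega : 2 * A + 1 ≤ B),
        add_zero]

theorem count_rowStart_succ (hA : A < r) :
    Nat.count (Mem r) ((A + 1) * (2 * r ^ 2)) =
      Nat.count (Mem r) (A * (2 * r ^ 2)) + (A + 1) ^ 2 := by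
  rw [show (A + 1) * (2 * r ^ 2) = A * (2 * r ^ 2) + 2 * r * r by ring, count_row hA le_rfl,
    min_eq_right (by omega), show (2 * A + 1 + 1) ^ 2 = 4 * (A + 1) ^ 2 by ring,
    Nat.mul_div_cancel_left _ (by norm_num)]

theorem count_rowStart (hA : A ≤ r) :
    6 * Nat.count (Mem r) (A * (2 * r ^ 2)) = A * (A + 1) * (2 * A + 1) := by
  induction A with
  | zero => simp
  | succ A ih =>
    rw [count_rowStart_succ (by omega), Nat.mul_add, ih (by omega)]
    ring

end LowRows

section Minimum

theorem excess_rowStart_le {A : ℕ} (hA : A ≤ r) :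
    excess r (r * (2 * r ^ 2)) ≤ excess r (A * (2 * r ^ 2)) := by
  have hcA : (6 * Nat.count (Mem r) (A * (2 * r ^ 2)) : ℤ) = A * (A + 1) * (2 * A + 1) := by
    exact_mod_cast count_rowStart hA
  have hcr : (6 * Nat.count (Mem r) (r * (2 * r ^ 2)) : ℤ) = r * (r + 1) * (2 * r + 1) := by
    exact_mod_cast count_rowStart le_rfl
  have hd : 0 ≤ ((r : ℤ) - A) * (r - A - 1) := by
    rcases hA.eq_or_lt with rfl | hlt
    · simp
    · apply mul_nonneg <;> omega
  -- `3 (excess (A q) - excess (r q)) = d (d - 1) (4r + 2A + 1)` with `d = r - A`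
  unfold excess
  push_cast
  nlinarith [mul_nonneg hd (show (0 : ℤ) ≤ 4 * r + 2 * A + 1 by positivity)]

theorem two_mul_le_quarterSq (hr : Even r) (k : ℕ) : 2 * r * k ≤ 4 * (k ^ 2 / 4) + r ^ 2 := by
  obtain ⟨m, rfl⟩ := hr
  rcases Nat.even_or_odd' k with ⟨u, rfl | rfl⟩
  · rw [show (2 * u) ^ 2 = 4 * u ^ 2 by ring, Nat.mul_div_cancel_left _ (by norm_num)]
    nlinarith [sq_nonneg ((u : ℤ) - m)]
  · have hsq : (2 * u + 1) ^ 2 / 4 = u ^ 2 + u := by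
      rw [show (2 * u + 1) ^ 2 = 4 * (u ^ 2 + u) + 1 by ring]
      omega
    have hcons : 0 ≤ ((u : ℤ) - m) * (u - m + 1) := by
      rcases le_or_gt m u with h | h
      · apply mul_nonneg <;> omega
      · apply mul_nonneg_of_nonpos_of_nonpos <;> omega
    rw [hsq]
    nlinarith

def sMax (r : ℕ) : ℕ := (r - 1) * (2 * r ^ 2) + (r - 1) * r

theorem count_sMax (hr : 0 < r) :
    Nat.count (Mem r) (sMax r) = Nat.count (Mem r) ((r - 1) * (2 * r ^ 2)) + r ^ 2 / 4 := by
  rw [sMax, count_row (by omega) (by omega), min_eq_left (by omega), Nat.sub_add_cancel hr]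

theorem four_mul_sq_div_four (hr : Even r) : 4 * (r ^ 2 / 4) = r ^ 2 :=
  Nat.mul_div_cancel' (by simpa using pow_dvd_pow_of_dvd hr.two_dvd 2)

theorem two_mul_excess_sMax (hr : Even r) (hr0 : 0 < r) :
    2 * excess r (sMax r) = 2 * excess r (r * (2 * r ^ 2)) + 2 * r - r ^ 2 := by
  have h4 := four_mul_sq_div_four hr
  rw [excess, excess, count_sMax hr0, sMax]
  obtain ⟨n, rfl⟩ : ∃ n, r = n + 1 := ⟨r - 1, by omega⟩
  have hrow := count_rowStart_succ (show n < n + 1 by omega)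
  simp only [Nat.add_sub_cancel]
  have h4' : ((4 * ((n + 1) ^ 2 / 4) : ℕ) : ℤ) = ((n + 1) ^ 2 : ℕ) := congrArg _ h4
  have hrow' : (Nat.count (Mem (n + 1)) ((n + 1) * (2 * (n + 1) ^ 2)) : ℤ) =
      Nat.count (Mem (n + 1)) (n * (2 * (n + 1) ^ 2)) + (n + 1) ^ 2 := by exact_mod_cast hrow
  push_cast at h4' ⊢
  linear_combination h4' - 4 * hrow'

theorem excess_sMax_le_of_lt (hr : Even r) {x : ℕ} (hx : x < r * (2 * r ^ 2)) :
    excess r (sMax r) ≤ excess r x := by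
  have hr0 : 0 < r := Nat.pos_of_ne_zero (by rintro rfl; simp at hx)
  have hr2 : 2 ≤ r := by rcases hr with ⟨m, rfl⟩; omega
  obtain ⟨A, B, e, hB, he, rfl⟩ := exists_digits hr0 x
  have hA : A < r := by
    by_contra! h
    have : r * (2 * r ^ 2) ≤ A * (2 * r ^ 2) := Nat.mul_le_mul_right _ h
    omega
  have hs := two_mul_excess_sMax hr hr0
  have hE := excess_rowStart_le hA.le
  have hcount := count_block hA hB he.le
  rw [count_row hA hB.le] at hcount
  split_ifs at hcount with hBA
  · -- `2 ⌊(B+1)²/4⌋ - B r` is minimal at `B = r - 1`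
    have h1 : (2 * r * (B + 1) : ℤ) ≤ 4 * ((B + 1) ^ 2 / 4 : ℕ) + r ^ 2 := by
      exact_mod_cast two_mul_le_quarterSq hr (B + 1)
    have h2 : (2 * r * (B + 1 + 1) : ℤ) ≤ 4 * ((B + 1 + 1) ^ 2 / 4 : ℕ) + r ^ 2 := by
      exact_mod_cast two_mul_le_quarterSq hr (B + 1 + 1)
    rw [quarterSq_succ B] at h2
    rw [min_eq_left (by omega)] at hcount
    unfold excess at hE hs ⊢
    rw [hcount]
    rcases le_total e (B / 2 + 1) with hmin | hmin
    · rw [min_eq_left hmin]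
      push_cast at *
      linarith
    · rw [min_eq_right hmin]
      push_cast at *
      linarith
  · -- past the last element of row `A`: the excess only decreases until the next row start
    have hE1 := excess_rowStart_le (A := A + 1) hA
    have hlt : (A * (2 * r ^ 2) + B * r + e : ℤ) < (A + 1) * (2 * r ^ 2) := by
      exact_mod_cast digits_lt_succ hB he
    have hrow : (Nat.count (Mem r) ((A + 1) * (2 * r ^ 2)) : ℤ) =
        Nat.count (Mem r) (A * (2 * r ^ 2)) + (A + 1) ^ 2 := by
      exact_mod_cast count_rowStart_succ hA
    rw [min_eq_right (by omega), show (2 * A + 1 + 1) ^ 2 = 4 * (A + 1) ^ 2 by ring,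
      Nat.mul_div_cancel_left _ (by norm_num)] at hcount
    have hr2' : (2 * r : ℤ) ≤ r ^ 2 := by nlinarith
    unfold excess at hE1 hs ⊢
    rw [hcount]
    push_cast at *
    linarith

theorem excess_sMax_le (hr : Even r) (hr0 : 0 < r) {x : ℕ} (hx : x ≤ conductor r) :
    excess r (sMax r) ≤ excess r x := by
  have hc : conductor r < 2 * r * (2 * r ^ 2) := by
    rw [conductor]
    exact Nat.mul_lt_mul_of_pos_left (Nat.sub_lt (by positivity) one_pos) (by omega)
  rcases lt_or_ge x (r * (2 * r ^ 2)) with hxr | hxr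
  · exact excess_sMax_le_of_lt hr hxr
  · rw [← excess_conductor_sub hr0 hx]
    have : r * (2 * r ^ 2) * 2 = 2 * r * (2 * r ^ 2) := by ring
    exact excess_sMax_le_of_lt hr (by omega)

theorem six_mul_excess_sMax (hr : Even r) (hr0 : 0 < r) :
    6 * excess r (sMax r) = -(r * (8 * r ^ 2 - 3 * r - 8)) := by
  have hs := two_mul_excess_sMax hr hr0
  have h6 : (6 * Nat.count (Mem r) (r * (2 * r ^ 2)) : ℤ) = r * (r + 1) * (2 * r + 1) := by
    exact_mod_cast count_rowStart le_rfl
  simp only [excess] at hs ⊢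
  push_cast at hs ⊢
  linear_combination 3 * hs + 2 * h6

end Minimum

theorem sig_setOf (p : ℕ → Prop) [DecidablePred p] (t : ℕ) :
    sig {n | p n} t = t / 2 - Nat.count p (t + 1) + 1 := by
  rw [sig, Nat.count_eq_card_filter_range, ← Set.ncard_coe_finset]
  congr 4
  ext n
  simp [and_comm]

theorem sig_eq_neg_excess {t : ℕ} (ht : Mem r t) : sig {n | Mem r n} t = -excess r t / 2 := by
  rw [sig_setOf, Nat.count_succ, if_pos ht, excess]
  push_cast
  ring

end Suzuki

theorem stmt17 (h q0 q : ℕ) (hh : 1 ≤ h) (hq0 : q0 = 2 ^ h) (hq : q = 2 * q0 ^ 2)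
    (S : Set ℕ)
    (hS : S = (AddSubmonoid.closure
      ({q, q + q0, q + 2 * q0, q + 2 * q0 + 1} : Set ℕ) : Set ℕ))
    (s : ℕ) (hs : s = (q0 - 1) * (q + q0)) :
    s = q0 * (q - 1) - q / 2 ∧ s ∈ S ∧ s ≤ ngCond S ∧
    (∀ t ∈ S, t ≤ ngCond S → sig S t ≤ sig S s) ∧
    sig S s = (q0 : ℚ) / 12 * (4 * (q : ℚ) - 3 * (q0 : ℚ) - 8) := by
  have hr : Even q0 := hq0 ▸ Nat.even_pow.2 ⟨even_two, by omega⟩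
  have hr0 : 0 < q0 := hq0 ▸ by positivity
  subst hq hS
  rw [Suzuki.coe_closure_eq hr0, Suzuki.ngCond_eq hr0]
  have hsMax : s = Suzuki.sMax q0 := by rw [hs, Suzuki.sMax]; ring
  have hmem : Suzuki.Mem q0 s := by
    simpa [hsMax, Suzuki.sMax] using
      Suzuki.mem_of_repr hr0 (q0 - 1) (q0 - 1) 0 (by omega) (by omega)
  have h6 : (6 * Suzuki.excess q0 s : ℚ) = -(q0 * (8 * q0 ^ 2 - 3 * q0 - 8)) := by
    rw [hsMax]; exact_mod_cast Suzuki.six_mul_excess_sMax hr hr0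
  obtain ⟨n, rfl⟩ : ∃ n, q0 = n + 1 := ⟨q0 - 1, by omega⟩
  have hq1 : 2 * (n + 1) ^ 2 - 1 = 2 * n ^ 2 + 4 * n + 1 := by ring_nf; omega
  refine ⟨?_, hmem, ?_, fun t ht htc => ?_, ?_⟩
  · rw [hs, hq1, Nat.mul_div_cancel_left _ two_pos, Nat.add_sub_cancel]
    refine Nat.eq_sub_of_add_eq ?_
    ring
  · rw [hs, Suzuki.conductor, hq1, Nat.add_sub_cancel]
    nlinarith
  · rw [Suzuki.sig_eq_neg_excess ht, Suzuki.sig_eq_neg_excess hmem, hsMax]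
    have hle : (Suzuki.excess (n + 1) (Suzuki.sMax (n + 1)) : ℚ) ≤ Suzuki.excess (n + 1) t := by
      exact_mod_cast Suzuki.excess_sMax_le hr hr0 htc
    linarith
  · rw [Suzuki.sig_eq_neg_excess hmem]
    push_cast at h6 ⊢
    linear_combination -h6 / 12
end

section
/- Let q ≥ 2 and r ≥ 2 be integers and let S = ⟨q^{r-1}, (q^r - 1)/(q-1)⟩ be the norm-trace semigroup. Then S = {λ₁·(q^{r-1}-1)/(q-1) + λ₂ : λ₁, λ₂ ∈ ℕ, λ₁/q ≤ λ₂ ≤ λ₁/(q-1)}. -/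
theorem stmt18 (q r : ℕ) (hq : 2 ≤ q) (hr : 2 ≤ r)
    (b d : ℕ) (hb : (q - 1) * b = q ^ r - 1) (hd : (q - 1) * d = q ^ (r - 1) - 1) :
    ∀ n : ℕ, n ∈ AddSubmonoid.closure ({q ^ (r - 1), b} : Set ℕ) ↔
      ∃ l1 l2 : ℕ, l1 ≤ q * l2 ∧ (q - 1) * l2 ≤ l1 ∧ n = l1 * d + l2 := by
  obtain ⟨s, rfl⟩ : ∃ s, q = s + 1 := ⟨q - 1, by omega⟩
  simp only [Nat.add_sub_cancel] at hb hd ⊢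
  have hs : 1 ≤ s := by omega
  have hpow : 1 ≤ (s + 1) ^ (r - 1) := Nat.one_le_pow _ _ (by omega)
  have ha : (s + 1) ^ (r - 1) = s * d + 1 := by omega
  have hqr : (s + 1) ^ r = (s + 1) * (s + 1) ^ (r - 1) := by
    conv_lhs => rw [show r = (r - 1) + 1 by omega]
    ring
  have hb' : b = (s + 1) * d + 1 := by
    have hrpow : 1 ≤ (s + 1) ^ r := Nat.one_le_pow _ _ (by omega)
    have h1 : s * b = s * ((s + 1) * d + 1) := by
      have h2 : (s + 1) * (s + 1) ^ (r - 1) = (s + 1) * (s * d + 1) := by rw [ha]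
      have h3 : (s + 1) * (s * d + 1) = s * ((s + 1) * d + 1) + 1 := by ring
      omega
    exact Nat.eq_of_mul_eq_mul_left (by omega) h1
  intro n
  rw [AddSubmonoid.mem_closure_pair]
  constructor
  · rintro ⟨x, y, rfl⟩
    refine ⟨x * s + y * (s + 1), x + y, by nlinarith, by nlinarith, ?_⟩
    simp only [smul_eq_mul, ha, hb']
    ring
  · rintro ⟨l1, l2, h1, h2, rfl⟩
    obtain ⟨v, hv⟩ := Nat.exists_eq_add_of_le h2
    have hvle : v ≤ l2 := by nlinarith
    obtain ⟨w, hw⟩ := Nat.exists_eq_add_of_le hvle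
    refine ⟨w, v, ?_⟩
    simp only [smul_eq_mul, ha, hb', hv, hw]
    ring
end
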